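/- arXiv:0809.3258 — 6 statements merged into one kernel-verified Lean document; each statement's English description precedes it below -/
import Mathlib

section
/- Let A be a smooth ℂ-algebra, V a ℂ-vector space (not necessarily finite-dimensional), ρ: A → End_ℂ(V) a ℂ-algebra homomorphism, and λ ∈ A. Regard End_ℂ(V) as an A-bimodule via ρ. Then there exists a ℂ-linear map φ: Der(A, A⊗A) → End_ℂ(V) which is a homomorphism of A-bimodules for the inner bimodule structure on Der(A, A⊗A) (i.e. φ(a·δ·b) = ρ(a)∘φ(δ)∘ρ(b) for all a, b ∈ A and δ ∈ Der(A, A⊗A)) and which satisfies φ(Δ_A) = ρ(λ), if and only if ρ(λ) lies in [ρ(A), End(V)]. -/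
open TensorProduct

set_option synthInstance.maxHeartbeats 1000000

universe u

section OutDer

variable (A : Type u) [Ring A] [Algebra ℂ A]

/-- The space `Der(A, A⊗A)` of ℂ-linear derivations `A → A ⊗[ℂ] A` with respect to the
*outer* bimodule structure on `A ⊗ A` (`a·(x⊗y)·b = ax ⊗ yb`), i.e. ℂ-linear maps with
`δ(xy) = δ(x)·(1⊗y) + (x⊗1)·δ(y)`. -/
def OutDer : Submodule ℂ (A →ₗ[ℂ] A ⊗[ℂ] A) where
  carrier := {δ | ∀ x y : A,
    δ (x * y) = δ x * ((1 : A) ⊗ₜ[ℂ] y) + (x ⊗ₜ[ℂ] (1 : A)) * δ y}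
  add_mem' := by
    intro f g hf hg x y
    simp only [LinearMap.add_apply, hf x y, hg x y, add_mul, mul_add]
    abel
  zero_mem' := by
    intro x y
    simp
  smul_mem' := by
    intro c f hf x y
    simp only [LinearMap.smul_apply, hf x y, smul_add, smul_mul_assoc, mul_smul_comm]

variable {A}

/-- The inner bimodule action `δ ↦ a·δ·b` on `Der(A, A⊗A)` (coming from the inner
bimodule structure `a·(x⊗y)·b = xb ⊗ ay` on `A ⊗ A`). -/
noncomputable def innerLR (a : A) (δ : ↥(OutDer A)) (b : A) : ↥(OutDer A) :=
  ⟨(LinearMap.mulLeft ℂ ((1 : A) ⊗ₜ[ℂ] a)) ∘ₗ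
      (LinearMap.mulRight ℂ (b ⊗ₜ[ℂ] (1 : A))) ∘ₗ (δ : A →ₗ[ℂ] A ⊗[ℂ] A), by
    intro x y
    have hδ := δ.2 x y
    have h1 : ((1 : A) ⊗ₜ[ℂ] y : A ⊗[ℂ] A) * (b ⊗ₜ[ℂ] (1 : A)) =
        (b ⊗ₜ[ℂ] (1 : A) : A ⊗[ℂ] A) * ((1 : A) ⊗ₜ[ℂ] y) := by
      simp [Algebra.TensorProduct.tmul_mul_tmul]
    have h2 : ((1 : A) ⊗ₜ[ℂ] a : A ⊗[ℂ] A) * (x ⊗ₜ[ℂ] (1 : A)) =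
        (x ⊗ₜ[ℂ] (1 : A) : A ⊗[ℂ] A) * ((1 : A) ⊗ₜ[ℂ] a) := by
      simp [Algebra.TensorProduct.tmul_mul_tmul]
    simp only [LinearMap.comp_apply, LinearMap.mulLeft_apply, LinearMap.mulRight_apply, hδ]
    rw [add_mul, mul_add]
    congr 1
    · rw [mul_assoc ((δ : A →ₗ[ℂ] A ⊗[ℂ] A) x), h1, ← mul_assoc ((δ : A →ₗ[ℂ] A ⊗[ℂ] A) x),
        ← mul_assoc, ← mul_assoc]
    · rw [mul_assoc (x ⊗ₜ[ℂ] (1 : A) : A ⊗[ℂ] A), ← mul_assoc ((1 : A) ⊗ₜ[ℂ] a : A ⊗[ℂ] A),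
        h2, mul_assoc]⟩

/-- The distinguished derivation `Δ_A : x ↦ x⊗1 − 1⊗x` in `Der(A, A⊗A)`. -/
noncomputable def deltaDer : ↥(OutDer A) :=
  ⟨(TensorProduct.mk ℂ A A).flip 1 - TensorProduct.mk ℂ A A 1, by
    intro x y
    simp only [LinearMap.sub_apply, LinearMap.flip_apply, TensorProduct.mk_apply]
    rw [sub_mul, mul_sub]
    simp only [Algebra.TensorProduct.tmul_mul_tmul, one_mul, mul_one]
    abel⟩

end OutDer




section Smooth

variable (B : Type u) [Ring B] [Algebra ℂ B]

/-- `B` as a module over its enveloping algebra `B^e = B ⊗[ℂ] Bᵐᵒᵖ`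
(the action `(b₁ ⊗ b₂ᵒᵖ) • x = b₁ * x * b₂`). -/
noncomputable instance envModule : Module (B ⊗[ℂ] Bᵐᵒᵖ) B :=
  TensorProduct.Algebra.module

/-- `Ω¹B`: the kernel of the multiplication map `B ⊗[ℂ] B → B`, viewed as a module over
the enveloping algebra `B^e = B ⊗[ℂ] Bᵐᵒᵖ` via the outer bimodule structure.  (Here
`B ⊗[ℂ] B` with the outer `B^e`-action is canonically identified with the left regular
module `B^e`, under which the multiplication map becomes `ξ ↦ ξ • 1`.) -/
noncomputable def Omega1 : Submodule (B ⊗[ℂ] Bᵐᵒᵖ) (B ⊗[ℂ] Bᵐᵒᵖ) :=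
  LinearMap.ker (LinearMap.toSpanSingleton (B ⊗[ℂ] Bᵐᵒᵖ) B 1)

/-- A ℂ-algebra `B` is *smooth* if it is finitely generated as a ℂ-algebra and
`Ω¹B` is a finitely generated projective module over `B^e = B ⊗[ℂ] Bᵐᵒᵖ`. -/
def IsSmoothAlgebra : Prop :=
  Algebra.FiniteType ℂ B ∧ Module.Finite (B ⊗[ℂ] Bᵐᵒᵖ) (Omega1 B) ∧
    Module.Projective (B ⊗[ℂ] Bᵐᵒᵖ) (Omega1 B)

/-!
Transport `A ⊗ A` to the enveloping algebra `Aᵉ = A ⊗ Aᵐᵒᵖ`, so that the outer structure becomes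
left and the inner structure right multiplication. `End V` is a right `Aᵉ`-module via
`v ⬝ (a ⊗ b) = ρ b * v * ρ a`, and `v ⬝ ξ ≡ v * ρ (ξ • 1)` modulo `[ρ(A), End V]`, so `Ω¹A`
maps `End V` into the commutators.
If `φ` is a bimodule map, take a dual basis `(fᵢ, ϖᵢ)` of the finitely generated projective
`Aᵉ`-module `Ω¹A`; then `Δ_A = Σᵢ ϖᵢ · (fᵢ ∘ d)` with `d` the universal derivation, hence
`φ(Δ_A) = Σᵢ φ(fᵢ ∘ d) ⬝ ϖᵢ` is a sum of commutators. Conversely `δ ↦ v ⬝ δ(a)` is a bimodule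
map sending `Δ_A` to `[v, ρ a]`, and the values `φ(Δ_A)` form a subspace.
-/

open MulOpposite

lemma Module.exists_sum_smul_eq_self_of_finite_projective (R M : Type*) [Semiring R]
    [AddCommMonoid M] [Module R M] [Module.Finite R M] [Module.Projective R M] :
    ∃ (n : ℕ) (f : Fin n → M →ₗ[R] R) (m : Fin n → M), ∀ x, ∑ i, f i x • m i = x := by
  obtain ⟨n, π, s, -, -, hπs⟩ := Module.Finite.exists_comp_eq_id_of_projective R M
  refine ⟨n, fun i => LinearMap.proj i ∘ₗ s, fun i => π (Pi.single i 1), fun x => ?_⟩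
  conv_rhs => rw [← LinearMap.id_apply (R := R) x, ← hπs, LinearMap.comp_apply,
    LinearMap.pi_apply_eq_sum_univ π (s x)]
  congr! with i - j
  simp [Pi.single_apply, eq_comm]

section TensorOp

variable {R A : Type*} [CommSemiring R] [Semiring A] [Algebra R A]

/-- Identifies `A ⊗ A` with the enveloping algebra `A ⊗ Aᵐᵒᵖ`; the outer bimodule structure
becomes left multiplication and the inner one right multiplication. -/
noncomputable def tensorOpEquiv : A ⊗[R] A ≃ₗ[R] A ⊗[R] Aᵐᵒᵖ :=
  TensorProduct.congr (LinearEquiv.refl R A) (opLinearEquiv R)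

@[simp]
lemma tensorOpEquiv_tmul (x y : A) : tensorOpEquiv (x ⊗ₜ[R] y) = x ⊗ₜ[R] op y := rfl

lemma tensorOpEquiv_tmul_one_mul (x : A) (η : A ⊗[R] A) :
    tensorOpEquiv ((x ⊗ₜ[R] 1) * η) = (x ⊗ₜ[R] 1) * tensorOpEquiv η := by
  induction η using TensorProduct.induction_on with
  | zero => simp
  | tmul u v => simp [Algebra.TensorProduct.tmul_mul_tmul]
  | add η₁ η₂ h₁ h₂ => simp only [mul_add, map_add, h₁, h₂]

lemma tensorOpEquiv_mul_one_tmul (y : A) (η : A ⊗[R] A) :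
    tensorOpEquiv (η * (1 ⊗ₜ[R] y)) = (1 ⊗ₜ[R] op y) * tensorOpEquiv η := by
  induction η using TensorProduct.induction_on with
  | zero => simp
  | tmul u v => simp [Algebra.TensorProduct.tmul_mul_tmul]
  | add η₁ η₂ h₁ h₂ => simp only [add_mul, mul_add, map_add, h₁, h₂]

lemma tensorOpEquiv_one_tmul_mul_mul_tmul_one (a b : A) (η : A ⊗[R] A) :
    tensorOpEquiv ((1 ⊗ₜ[R] a) * η * (b ⊗ₜ[R] 1)) = tensorOpEquiv η * (b ⊗ₜ[R] op a) := by
  induction η using TensorProduct.induction_on with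
  | zero => simp
  | tmul u v => simp [Algebra.TensorProduct.tmul_mul_tmul]
  | add η₁ η₂ h₁ h₂ => simp only [add_mul, mul_add, map_add, h₁, h₂]

end TensorOp

section EnvAction

variable {R A V : Type*} [CommRing R] [Ring A] [Algebra R A] [AddCommGroup V] [Module R V]
variable (ρ : A →ₐ[R] Module.End R V)

/-- `End V` as a right `A ⊗ Aᵐᵒᵖ`-module through `ρ`. -/
noncomputable def envAct : A ⊗[R] Aᵐᵒᵖ →ₗ[R] Module.End R V →ₗ[R] Module.End R V :=
  TensorProduct.lift <| LinearMap.mk₂ R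
    (fun a b => LinearMap.mulRight R (ρ a) ∘ₗ LinearMap.mulLeft R (ρ b.unop))
    (by intro a a' b; ext; simp [mul_add])
    (by intro c a b; ext; simp)
    (by intro a b b'; ext; simp [add_mul])
    (by intro c a b; ext; simp)

@[simp]
lemma envAct_tmul (a : A) (b : Aᵐᵒᵖ) (v : Module.End R V) :
    envAct ρ (a ⊗ₜ[R] b) v = ρ b.unop * v * ρ a := by
  simp [envAct]

lemma envAct_mul (r s : A ⊗[R] Aᵐᵒᵖ) (v : Module.End R V) :
    envAct ρ (r * s) v = envAct ρ s (envAct ρ r v) := by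
  induction r using TensorProduct.induction_on with
  | zero => simp
  | add r₁ r₂ h₁ h₂ => simp [add_mul, h₁, h₂]
  | tmul a b =>
    induction s using TensorProduct.induction_on with
    | zero => simp
    | add s₁ s₂ h₁ h₂ => simp [mul_add, h₁, h₂]
    | tmul c d => simp [Algebra.TensorProduct.tmul_mul_tmul, mul_assoc]

def commutatorSpan : Submodule R (Module.End R V) :=
  Submodule.span R {f | ∃ (a : A) (g : Module.End R V), f = ρ a * g - g * ρ a}

lemma commutator_mem_commutatorSpan (a : A) (g : Module.End R V) :
    ρ a * g - g * ρ a ∈ commutatorSpan ρ :=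
  Submodule.subset_span ⟨a, g, rfl⟩

end EnvAction

section Omega

variable {A : Type u} [Ring A] [Algebra ℂ A]

lemma envModule_tmul_smul (a : A) (b : Aᵐᵒᵖ) (x : A) : (a ⊗ₜ[ℂ] b) • x = a * (x * b.unop) :=
  rfl

lemma mem_omega1_iff {ξ : A ⊗[ℂ] Aᵐᵒᵖ} : ξ ∈ Omega1 A ↔ ξ • (1 : A) = 0 := by
  simp [Omega1]

/-- The universal derivation `A → Ω¹A`, with the sign that matches `Δ_A`. -/
noncomputable def omegaD : A →ₗ[ℂ] Omega1 A where
  toFun x := ⟨x ⊗ₜ op 1 - 1 ⊗ₜ op x, by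
    simp [mem_omega1_iff, sub_smul, envModule_tmul_smul]⟩
  map_add' x y := by
    ext
    simp only [op_add, add_tmul, tmul_add, AddMemClass.mk_add_mk]
    abel
  map_smul' c x := by ext; simp [TensorProduct.smul_tmul', TensorProduct.tmul_smul, smul_sub]

@[simp]
lemma coe_omegaD (x : A) : (omegaD x : A ⊗[ℂ] Aᵐᵒᵖ) = x ⊗ₜ op 1 - 1 ⊗ₜ op x := rfl

lemma omegaD_mul (x y : A) :
    omegaD (x * y) = ((1 : A) ⊗ₜ[ℂ] op y) • omegaD x + (x ⊗ₜ[ℂ] (1 : Aᵐᵒᵖ)) • omegaD y := by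
  ext
  simp only [coe_omegaD, Submodule.coe_add, Submodule.coe_smul, smul_eq_mul, mul_sub,
    Algebra.TensorProduct.tmul_mul_tmul, one_mul, mul_one, ← op_mul, op_one]
  abel

variable {V : Type*} [AddCommGroup V] [Module ℂ V] (ρ : A →ₐ[ℂ] Module.End ℂ V)

lemma envAct_sub_mul_smul_one_mem_commutatorSpan (ξ : A ⊗[ℂ] Aᵐᵒᵖ) (v : Module.End ℂ V) :
    envAct ρ ξ v - v * ρ (ξ • (1 : A)) ∈ commutatorSpan ρ := by
  induction ξ using TensorProduct.induction_on with
  | zero => simp [zero_smul (A ⊗[ℂ] Aᵐᵒᵖ) (1 : A)]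
  | tmul a b =>
    convert commutator_mem_commutatorSpan ρ b.unop (v * ρ a) using 1
    simp [envModule_tmul_smul, mul_assoc]
  | add ξ₁ ξ₂ h₁ h₂ =>
    convert add_mem h₁ h₂ using 1
    simp only [map_add, LinearMap.add_apply, add_smul, mul_add]
    abel

lemma envAct_mem_commutatorSpan_of_mem_omega1 {ω : A ⊗[ℂ] Aᵐᵒᵖ} (hω : ω ∈ Omega1 A)
    (v : Module.End ℂ V) : envAct ρ ω v ∈ commutatorSpan ρ := by
  simpa [mem_omega1_iff.mp hω] using envAct_sub_mul_smul_one_mem_commutatorSpan ρ ω v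

end Omega

section Der

variable {A : Type u} [Ring A] [Algebra ℂ A]

lemma mem_outDer_iff (δ : A →ₗ[ℂ] A ⊗[ℂ] A) :
    δ ∈ OutDer A ↔ ∀ x y, tensorOpEquiv (δ (x * y)) =
      (1 ⊗ₜ op y) * tensorOpEquiv (δ x) + (x ⊗ₜ 1) * tensorOpEquiv (δ y) := by
  refine forall₂_congr fun x y => ?_
  rw [← tensorOpEquiv_mul_one_tmul, ← tensorOpEquiv_tmul_one_mul, ← map_add]
  exact tensorOpEquiv.injective.eq_iff.symm

noncomputable def innerAction (δ : OutDer A) : A ⊗[ℂ] Aᵐᵒᵖ →ₗ[ℂ] OutDer A where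
  toFun r := ⟨tensorOpEquiv.symm.toLinearMap ∘ₗ LinearMap.mulRight ℂ r ∘ₗ
      tensorOpEquiv.toLinearMap ∘ₗ (δ : A →ₗ[ℂ] A ⊗[ℂ] A), by
    rw [mem_outDer_iff]
    intro x y
    simp [(mem_outDer_iff _).mp δ.2 x y, add_mul, mul_assoc]⟩
  map_add' r s := by ext; simp [mul_add]
  map_smul' c r := by ext; simp [mul_smul_comm]

lemma tensorOpEquiv_innerAction_apply (δ : OutDer A) (r : A ⊗[ℂ] Aᵐᵒᵖ) (x : A) :
    tensorOpEquiv ((innerAction δ r : A →ₗ[ℂ] A ⊗[ℂ] A) x) =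
      tensorOpEquiv ((δ : A →ₗ[ℂ] A ⊗[ℂ] A) x) * r := by
  simp [innerAction]

lemma innerAction_tmul (δ : OutDer A) (b : A) (a : Aᵐᵒᵖ) :
    innerAction δ (b ⊗ₜ a) = innerLR a.unop δ b := by
  ext x
  apply tensorOpEquiv.injective
  rw [tensorOpEquiv_innerAction_apply]
  simp [innerLR, ← mul_assoc, tensorOpEquiv_one_tmul_mul_mul_tmul_one]

/-- Half of the isomorphism `Hom_{Aᵉ}(Ω¹A, Aᵉ) ≅ Der(A, A ⊗ A)`. -/
noncomputable def derOfForm (f : Omega1 A →ₗ[A ⊗[ℂ] Aᵐᵒᵖ] A ⊗[ℂ] Aᵐᵒᵖ) : OutDer A :=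
  ⟨tensorOpEquiv.symm.toLinearMap ∘ₗ f.restrictScalars ℂ ∘ₗ omegaD, by
    rw [mem_outDer_iff]
    intro x y
    simp [omegaD_mul]⟩

lemma tensorOpEquiv_derOfForm_apply (f : Omega1 A →ₗ[A ⊗[ℂ] Aᵐᵒᵖ] A ⊗[ℂ] Aᵐᵒᵖ) (x : A) :
    tensorOpEquiv ((derOfForm f : A →ₗ[ℂ] A ⊗[ℂ] A) x) = f (omegaD x) := by
  simp [derOfForm]

lemma tensorOpEquiv_deltaDer_apply (x : A) :
    tensorOpEquiv (((deltaDer : OutDer A) : A →ₗ[ℂ] A ⊗[ℂ] A) x) = (omegaD x : A ⊗[ℂ] Aᵐᵒᵖ) := by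
  simp [deltaDer]

lemma deltaDer_mem_span_innerAction [Module.Finite (A ⊗[ℂ] Aᵐᵒᵖ) (Omega1 A)]
    [Module.Projective (A ⊗[ℂ] Aᵐᵒᵖ) (Omega1 A)] :
    deltaDer ∈ Submodule.span ℂ
      {d | ∃ (δ : OutDer A) (ω : Omega1 A), d = innerAction δ (ω : A ⊗[ℂ] Aᵐᵒᵖ)} := by
  obtain ⟨n, f, ϖ, hfϖ⟩ :=
    Module.exists_sum_smul_eq_self_of_finite_projective (A ⊗[ℂ] Aᵐᵒᵖ) (Omega1 A)
  have hΔ : deltaDer = ∑ i, innerAction (derOfForm (f i)) (ϖ i : A ⊗[ℂ] Aᵐᵒᵖ) := by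
    ext x
    apply tensorOpEquiv.injective
    simp only [tensorOpEquiv_deltaDer_apply, Submodule.coe_sum, LinearMap.sum_apply, map_sum,
      tensorOpEquiv_innerAction_apply, tensorOpEquiv_derOfForm_apply]
    conv_lhs => rw [← hfϖ (omegaD x)]
    simp
  rw [hΔ]
  exact Submodule.sum_mem _ fun i _ => Submodule.subset_span ⟨_, _, rfl⟩

end Der

section BimoduleHoms

variable {A : Type u} [Ring A] [Algebra ℂ A]
variable {V : Type*} [AddCommGroup V] [Module ℂ V] (ρ : A →ₐ[ℂ] Module.End ℂ V)

def innerBimoduleHoms : Submodule ℂ (OutDer A →ₗ[ℂ] Module.End ℂ V) where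
  carrier := {φ | ∀ (a b : A) (δ : OutDer A), φ (innerLR a δ b) = ρ a * φ δ * ρ b}
  add_mem' hφ hψ a b δ := by simp [hφ a b δ, hψ a b δ, mul_add, add_mul]
  zero_mem' a b δ := by simp
  smul_mem' c φ hφ a b δ := by simp [hφ a b δ]

lemma map_innerAction {φ : OutDer A →ₗ[ℂ] Module.End ℂ V} (hφ : φ ∈ innerBimoduleHoms ρ)
    (δ : OutDer A) (r : A ⊗[ℂ] Aᵐᵒᵖ) : φ (innerAction δ r) = envAct ρ r (φ δ) := by
  have h : φ ∘ₗ innerAction δ = (envAct ρ).flip (φ δ) :=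
    TensorProduct.ext' fun b a => by simp [innerAction_tmul, hφ _ _ δ]
  exact LinearMap.congr_fun h r

lemma apply_deltaDer_mem_commutatorSpan [Module.Finite (A ⊗[ℂ] Aᵐᵒᵖ) (Omega1 A)]
    [Module.Projective (A ⊗[ℂ] Aᵐᵒᵖ) (Omega1 A)] {φ : OutDer A →ₗ[ℂ] Module.End ℂ V}
    (hφ : φ ∈ innerBimoduleHoms ρ) : φ deltaDer ∈ commutatorSpan ρ := by
  refine (Submodule.span_le (p := (commutatorSpan ρ).comap φ)).mpr ?_
    deltaDer_mem_span_innerAction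
  rintro _ ⟨δ, ω, rfl⟩
  rw [SetLike.mem_coe, Submodule.mem_comap, map_innerAction ρ hφ]
  exact envAct_mem_commutatorSpan_of_mem_omega1 ρ ω.2 _

noncomputable def evalHom (a : A) (v : Module.End ℂ V) : OutDer A →ₗ[ℂ] Module.End ℂ V :=
  (envAct ρ).flip v ∘ₗ tensorOpEquiv.toLinearMap ∘ₗ LinearMap.applyₗ a ∘ₗ (OutDer A).subtype

lemma evalHom_mem_innerBimoduleHoms (a : A) (v : Module.End ℂ V) :
    evalHom ρ a v ∈ innerBimoduleHoms ρ := by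
  intro a' b δ
  simp [evalHom, innerLR, ← mul_assoc, tensorOpEquiv_one_tmul_mul_mul_tmul_one, envAct_mul]

lemma evalHom_deltaDer (a : A) (v : Module.End ℂ V) :
    evalHom ρ a v deltaDer = v * ρ a - ρ a * v := by
  simp [evalHom, deltaDer]

lemma commutatorSpan_le_map_innerBimoduleHoms :
    commutatorSpan ρ ≤ (innerBimoduleHoms ρ).map (LinearMap.applyₗ deltaDer) := by
  refine Submodule.span_le.mpr ?_
  rintro _ ⟨a, g, rfl⟩
  refine ⟨evalHom ρ a (-g), evalHom_mem_innerBimoduleHoms ρ a (-g), ?_⟩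
  simp only [LinearMap.applyₗ_apply_apply, evalHom_deltaDer, neg_mul, mul_neg]
  abel

end BimoduleHoms

/-- Let `A` be a smooth ℂ-algebra, `V` a ℂ-vector space,
`ρ : A → End_ℂ(V)` an algebra homomorphism and `λ ∈ A`.  There exists a ℂ-linear map
`φ : Der(A, A⊗A) → End_ℂ(V)` which is a homomorphism of `A`-bimodules for the inner
bimodule structure (`φ(a·δ·b) = ρ(a)∘φ(δ)∘ρ(b)`) and satisfies `φ(Δ_A) = ρ(λ)`, if and
only if `ρ(λ)` lies in the commutator space `[ρ(A), End(V)]`. -/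
theorem stmt0 (A : Type u) [Ring A] [Algebra ℂ A] (hA : IsSmoothAlgebra A)
    (V : Type u) [AddCommGroup V] [Module ℂ V]
    (ρ : A →ₐ[ℂ] Module.End ℂ V) (lam : A) :
    (∃ φ : ↥(OutDer A) →ₗ[ℂ] Module.End ℂ V,
        (∀ (a b : A) (δ : ↥(OutDer A)), φ (innerLR a δ b) = ρ a * φ δ * ρ b) ∧
        φ (deltaDer (A := A)) = ρ lam) ↔
      ρ lam ∈ Submodule.span ℂ
        {f : Module.End ℂ V | ∃ (a : A) (g : Module.End ℂ V), f = ρ a * g - g * ρ a} := by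
  obtain ⟨-, _, _⟩ := hA
  constructor
  · rintro ⟨φ, hφ, hφΔ⟩
    rw [← hφΔ]
    exact apply_deltaDer_mem_commutatorSpan ρ hφ
  · intro h
    obtain ⟨φ, hφ, hφΔ⟩ := commutatorSpan_le_map_innerBimoduleHoms ρ h
    exact ⟨φ, hφ, hφΔ⟩
end Smooth
end

section
/- Let A be an integral domain which is finitely generated as a ℂ-algebra and is a Dedekind domain, let I be a nonzero ideal of A, and let V be an A-module which is finite-dimensional as a ℂ-vector space. Then Hom_A(I, V) is a finite-dimensional ℂ-vector space and dim_ℂ Hom_A(I, V) = dim_ℂ V. -/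
/-!
Let `J = Ann_A V`. If `J ≠ 0`, the Dedekind property gives `a ∈ I` with `I = (a) + I J`, and
cancelling `I` in `I (x) ⊆ I J` shows `(I J : a) = J`; so `r ↦ r a` identifies `A / J` with
`I / I J`. Every `A`-linear map `I → V` kills `I J`, hence
`Hom_A(I, V) = Hom_A(I / I J, V) ≃ Hom_A(A / J, V) = V`, the composite being evaluation at `a`.
If `J = 0`, then `A` embeds into `End_ℂ V`, so it is a finite-dimensional domain, i.e. a field,
and `I = A`.
-/

namespace Ideal

variable {A : Type*} [CommRing A] {I J : Ideal A} {a : A}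

/-- `r ↦ r a` induces an isomorphism `A / J ≃ I / I J`. -/
def IsFreeGeneratorModMul (I J : Ideal A) (a : A) : Prop :=
  a ∈ I ∧ I ≤ span {a} ⊔ I * J ∧ ∀ x, x * a ∈ I * J → x ∈ J

lemma isFreeGeneratorModMul_top_one (J : Ideal A) : (⊤ : Ideal A).IsFreeGeneratorModMul J 1 :=
  ⟨Submodule.mem_top, by simp, fun x hx => by simpa using hx⟩

lemma exists_isFreeGeneratorModMul [IsDedekindDomain A] (hI : I ≠ ⊥) (hJ : J ≠ ⊥) :
    ∃ a, I.IsFreeGeneratorModMul J a := by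
  obtain ⟨a, hIa⟩ := IsDedekindDomain.exists_sup_span_eq mul_le_left (mul_ne_zero hI hJ)
  refine ⟨a, hIa ▸ mem_sup_right (mem_span_singleton_self a), hIa.ge.trans_eq (sup_comm _ _), ?_⟩
  intro x hx
  have hle : I * span {x} ≤ I * J := by
    conv_lhs => rw [← hIa]
    rw [sup_mul, span_singleton_mul_span_singleton, mul_comm a]
    exact sup_le mul_le_left ((span_singleton_le_iff_mem _).mpr hx)
  rw [← dvd_iff_le, mul_dvd_mul_iff_left (show I ≠ 0 from hI), dvd_iff_le,
    span_singleton_le_iff_mem] at hle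
  exact hle

variable {V : Type*} [AddCommGroup V] [Module A V]

lemma IsFreeGeneratorModMul.exists_sub_mem (h : I.IsFreeGeneratorModMul J a) {y : A}
    (hy : y ∈ I) : ∃ r, y - r * a ∈ I * J := by
  obtain ⟨u, hu, z, hz, rfl⟩ := Submodule.mem_sup.mp (h.2.1 hy)
  obtain ⟨r, rfl⟩ := mem_span_singleton'.mp hu
  exact ⟨r, by simpa using hz⟩

lemma map_eq_zero_of_mem_mul_annihilator (f : I →ₗ[A] V) {y : A} (hyI : y ∈ I)
    (hy : y ∈ I * Module.annihilator A V) : f ⟨y, hyI⟩ = 0 := by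
  induction hy using Submodule.mul_induction_on' with
  | mem_mul_mem m hm n hn =>
    rw [show (⟨m * n, hyI⟩ : I) = n • ⟨m, hm⟩ from Subtype.ext (mul_comm m n), map_smul,
      Module.mem_annihilator.mp hn]
  | add x hx z hz ihx ihz =>
    rw [show (⟨x + z, hyI⟩ : I) = ⟨x, mul_le_left hx⟩ + ⟨z, mul_le_left hz⟩ from rfl, map_add,
      ihx, ihz, add_zero]

variable (V) in
lemma IsFreeGeneratorModMul.injective_eval
    (h : I.IsFreeGeneratorModMul (Module.annihilator A V) a) :
    Function.Injective fun f : I →ₗ[A] V => f ⟨a, h.1⟩ := by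
  intro f g (hfg : f ⟨a, h.1⟩ = g ⟨a, h.1⟩)
  ext ⟨y, hy⟩
  obtain ⟨r, hr⟩ := h.exists_sub_mem hy
  have hy : (⟨y, hy⟩ : I) = r • ⟨a, h.1⟩ + ⟨y - r * a, mul_le_left hr⟩ := Subtype.ext (by simp)
  rw [hy, map_add, map_add, map_smul, map_smul, hfg, map_eq_zero_of_mem_mul_annihilator f _ hr,
    map_eq_zero_of_mem_mul_annihilator g _ hr]

variable (V) in
lemma IsFreeGeneratorModMul.surjective_eval
    (h : I.IsFreeGeneratorModMul (Module.annihilator A V) a) :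
    Function.Surjective fun f : I →ₗ[A] V => f ⟨a, h.1⟩ := by
  intro v
  let N : Submodule A I := Submodule.comap (Submodule.subtype I) (I * Module.annihilator A V)
  let π : A →ₗ[A] I ⧸ N := N.mkQ ∘ₗ LinearMap.toSpanSingleton A I ⟨a, h.1⟩
  have hπ : Function.Surjective π := by
    intro q
    obtain ⟨⟨y, hy⟩, rfl⟩ := N.mkQ_surjective q
    obtain ⟨r, hr⟩ := h.exists_sub_mem hy
    refine ⟨r, (Submodule.Quotient.eq N).mpr ?_⟩
    simpa [N, π] using neg_mem hr
  have hker : LinearMap.ker π ≤ LinearMap.ker (LinearMap.toSpanSingleton A V v) := by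
    intro r hr
    have : r * a ∈ I * Module.annihilator A V := by simpa [N, π] using hr
    simp [Module.mem_annihilator.mp (h.2.2 r this) v]
  refine ⟨(LinearMap.ker π).liftQ _ hker ∘ₗ (π.quotKerEquivOfSurjective hπ).symm.toLinearMap ∘ₗ
    N.mkQ, ?_⟩
  have hπ_one : N.mkQ ⟨a, h.1⟩ = π 1 := by simp [π]
  simp only [LinearMap.comp_apply, LinearEquiv.coe_coe, hπ_one,
    LinearMap.quotKerEquivOfSurjective_symm_apply, Submodule.liftQ_apply,
    LinearMap.toSpanSingleton_apply, one_smul]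

end Ideal

lemma isField_of_annihilator_eq_bot (K : Type*) {A V : Type*} [Field K] [CommRing A] [IsDomain A]
    [Algebra K A] [AddCommGroup V] [Module A V] [Module K V] [IsScalarTower K A V]
    [FiniteDimensional K V] (h : Module.annihilator A V = ⊥) : IsField A := by
  have : FaithfulSMul A V := Module.annihilator_eq_bot.mp h
  have : Module.Finite K A := .of_injective (Algebra.lsmul K K V).toLinearMap fun x y hxy =>
    eq_of_smul_eq_smul fun v => LinearMap.congr_fun hxy v
  have : IsArtinianRing A := .of_finite K A
  exact IsArtinianRing.isField_of_isDomain A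

theorem stmt8_general {A : Type*} [CommRing A] [IsDedekindDomain A] [Algebra ℂ A]
    (I : Ideal A) (hI : I ≠ ⊥)
    {V : Type*} [AddCommGroup V] [Module A V] [Module ℂ V] [IsScalarTower ℂ A V]
    [FiniteDimensional ℂ V] :
    FiniteDimensional ℂ (↥I →ₗ[A] V) ∧
      Module.finrank ℂ (↥I →ₗ[A] V) = Module.finrank ℂ V := by
  obtain ⟨a, ha⟩ : ∃ a, I.IsFreeGeneratorModMul (Module.annihilator A V) a := by
    by_cases hV : Module.annihilator A V = ⊥
    · have hA : IsField A := isField_of_annihilator_eq_bot ℂ hV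
      obtain rfl : I = ⊤ :=
        ((Ring.isField_iff_isSimpleOrder_ideal.mp hA).eq_bot_or_eq_top I).resolve_left hI
      exact ⟨1, Ideal.isFreeGeneratorModMul_top_one _⟩
    · exact Ideal.exists_isFreeGeneratorModMul hI hV
  let e : (I →ₗ[A] V) ≃ₗ[ℂ] V :=
    .ofBijective (LinearMap.applyₗ' ℂ ⟨a, ha.1⟩) ⟨ha.injective_eval V, ha.surjective_eval V⟩
  exact ⟨Module.Finite.equiv e.symm, e.finrank_eq⟩

/-- Let `A` be the coordinate ring of a smooth affine irreducible curve
over ℂ (an integral domain, finitely generated as a ℂ-algebra, which is a Dedekind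
domain), `I` a nonzero ideal of `A`, and `V` an `A`-module which is finite-dimensional
over ℂ.  Then `Hom_A(I, V)` is finite-dimensional over ℂ of dimension `dim_ℂ V`. -/
theorem stmt8 {A : Type*} [CommRing A] [IsDomain A] [IsDedekindDomain A] [Algebra ℂ A]
    (hfg : Algebra.FiniteType ℂ A)
    (I : Ideal A) (hI : I ≠ ⊥)
    {V : Type*} [AddCommGroup V] [Module A V] [Module ℂ V] [IsScalarTower ℂ A V]
    [FiniteDimensional ℂ V] :
    FiniteDimensional ℂ (↥I →ₗ[A] V) ∧
      Module.finrank ℂ (↥I →ₗ[A] V) = Module.finrank ℂ V :=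
  stmt8_general I hI
end

section
/- Let A be an integral domain which is finitely generated as a ℂ-algebra and is a Dedekind domain, and let I and J be nonzero ideals of A. Then the rings A[I] and A[J] are Morita equivalent; that is, the categories of left A[I]-modules and of left A[J]-modules are equivalent as additive categories. -/
/-!
A module `M` over `A[V]` splits as `e M ⊕ e_∞ M`, where `e M` is an `A`-module, `e_∞ M` is a
`ℂ`-vector space and `V` acts through a pairing `e_∞ M → Hom_A(V, e M)`; conversely such data
define an `A[V]`-module. Let `X`, `Y` be `A`-modules with a surjection `X ⊗ Y → A` and maps
`X ⊗ W → V`, `Y ⊗ V → W`, all compatible as in a Morita context. Then `M ↦ Hom_A(X, e M) ⊕ e_∞ M`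
turns `A[V]`-modules into `A[W]`-modules, and the same construction for `Y` is inverse to it: an
element of `X ⊗ Y` mapping to `1` inverts the unit `m ↦ (y ↦ (x ↦ ⟨x, y⟩ • e m), e_∞ m)`.
For nonzero ideals `I`, `J` of a Dedekind domain choose `J J' = (d)` and `I I' = (e)`; then
`X = I J'` and `Y = J I'`, with the products `X J ⊆ d I`, `Y I ⊆ e J`, `X Y = (d e)` divided by
`d`, `e` and `d e`, form such a context: `X` and `Y` stand for `I J⁻¹` and `J I⁻¹`.
-/

universe u

section OPE

variable (A : Type u) [CommRing A] [Algebra ℂ A] (I : Type u) [AddCommGroup I] [Module A I]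

/-- The one-point extension `A[I]`: triples `(a, b, c)` with `a ∈ A`, `b ∈ I`, `c ∈ ℂ`,
thought of as upper-triangular matrices `[[a, b], [0, c]]`. -/
abbrev OPE : Type u := A × I × ℂ

variable {A I}

/-- Multiplication of the one-point extension:
`(a,b,c)·(a',b',c') = (a a', a•b' + c'•b, c c')`, where `ℂ` acts on `I` through
`algebraMap ℂ A`. -/
def OPE.mul (x y : OPE A I) : OPE A I :=
  (x.1 * y.1, x.1 • y.2.1 + algebraMap ℂ A y.2.2 • x.2.1, x.2.2 * y.2.2)

instance OPE.instMul : Mul (OPE A I) := ⟨OPE.mul⟩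

instance OPE.instOne : One (OPE A I) := ⟨(1, 0, 1)⟩

instance OPE.instRing : Ring (OPE A I) where
  __ := (inferInstance : AddCommGroup (OPE A I))
  mul := OPE.mul
  one := (1, 0, 1)
  mul_assoc x y z := by
    show OPE.mul (OPE.mul x y) z = OPE.mul x (OPE.mul y z)
    unfold OPE.mul
    refine Prod.ext (mul_assoc _ _ _) (Prod.ext ?_ (mul_assoc _ _ _))
    show (x.1 * y.1) • z.2.1 + algebraMap ℂ A z.2.2 • (x.1 • y.2.1 + algebraMap ℂ A y.2.2 • x.2.1)
        = x.1 • (y.1 • z.2.1 + algebraMap ℂ A z.2.2 • y.2.1) + algebraMap ℂ A (y.2.2 * z.2.2) • x.2.1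
    rw [map_mul]
    module
  one_mul x := by
    show OPE.mul (1, 0, 1) x = x
    unfold OPE.mul
    simp
  mul_one x := by
    show OPE.mul x (1, 0, 1) = x
    unfold OPE.mul
    simp
  left_distrib x y z := by
    show OPE.mul x (y + z) = OPE.mul x y + OPE.mul x z
    unfold OPE.mul
    refine Prod.ext (mul_add _ _ _) (Prod.ext ?_ (mul_add _ _ _))
    show x.1 • (y.2.1 + z.2.1) + algebraMap ℂ A (y.2.2 + z.2.2) • x.2.1
        = (x.1 • y.2.1 + algebraMap ℂ A y.2.2 • x.2.1) + (x.1 • z.2.1 + algebraMap ℂ A z.2.2 • x.2.1)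
    rw [map_add]
    module
  right_distrib x y z := by
    show OPE.mul (x + y) z = OPE.mul x z + OPE.mul y z
    unfold OPE.mul
    refine Prod.ext (add_mul _ _ _) (Prod.ext ?_ (add_mul _ _ _))
    show (x.1 + y.1) • z.2.1 + algebraMap ℂ A z.2.2 • (x.2.1 + y.2.1)
        = (x.1 • z.2.1 + algebraMap ℂ A z.2.2 • x.2.1) + (y.1 • z.2.1 + algebraMap ℂ A z.2.2 • y.2.1)
    module
  zero_mul x := by
    show OPE.mul 0 x = 0
    unfold OPE.mul
    simp
  mul_zero x := by
    show OPE.mul x 0 = 0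
    unfold OPE.mul
    simp

/-- The structure map `ℂ → A[I]`, `c ↦ (algebraMap ℂ A c, 0, c)`. -/
def OPE.algMap : ℂ →+* OPE A I where
  toFun c := (algebraMap ℂ A c, 0, c)
  map_one' := by simp only [map_one]; rfl
  map_mul' c d := by
    show _ = OPE.mul _ _
    unfold OPE.mul
    simp
  map_zero' := by simp only [map_zero]; rfl
  map_add' c d := by
    have : ∀ x y : OPE A I, x + y = (x.1 + y.1, x.2.1 + y.2.1, x.2.2 + y.2.2) := fun x y => rfl
    rw [this]
    simp only [map_add, add_zero]

instance OPE.instAlgebra : Algebra ℂ (OPE A I) :=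
  (OPE.algMap (A := A) (I := I)).toAlgebra' (by
    intro c x
    show OPE.mul _ _ = OPE.mul _ _
    unfold OPE.mul OPE.algMap
    simp [mul_comm])

/-- The idempotent `e = [[1,0],[0,0]]` of `A[I]`. -/
def OPE.e : OPE A I := (1, 0, 0)

/-- The idempotent `e_∞ = [[0,0],[0,1]]` of `A[I]`. -/
def OPE.einf : OPE A I := (0, 0, 1)

end OPE

namespace NonUnitalRingHom

variable {S R : Type*} [Semiring S] [Ring R] (f : S →ₙ+* R)
variable (M : Type*) [AddCommGroup M] [Module R M]

def corner : AddSubgroup M :=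
  (DistribSMul.toAddMonoidHom M (f 1)).eqLocus (AddMonoidHom.id M)

variable {f M}

lemma mem_corner {m : M} : m ∈ f.corner M ↔ f 1 • m = m := Iff.rfl

lemma smul_mem_corner (s : S) (m : M) : f s • m ∈ f.corner M := by
  rw [mem_corner, ← mul_smul, ← map_mul, one_mul]

instance : SMul S (f.corner M) := ⟨fun s m => ⟨f s • (m : M), smul_mem_corner s (m : M)⟩⟩

@[simp] lemma coe_corner_smul (s : S) (m : f.corner M) :
    ((s • m : f.corner M) : M) = f s • (m : M) := rfl

instance : Module S (f.corner M) where
  one_smul m := Subtype.ext m.2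
  mul_smul s t m := Subtype.ext (by simp [mul_smul])
  smul_zero s := Subtype.ext (by simp)
  smul_add s m n := Subtype.ext (by simp)
  add_smul s t m := Subtype.ext (by simp [add_smul])
  zero_smul m := Subtype.ext (by simp)

variable (f M) in
def cornerProj : M →+ f.corner M where
  toFun m := ⟨f 1 • m, smul_mem_corner 1 m⟩
  map_zero' := Subtype.ext (smul_zero _)
  map_add' _ _ := Subtype.ext (smul_add _ _ _)

@[simp] lemma coe_cornerProj (m : M) : (f.cornerProj M m : M) = f 1 • m := rfl

lemma cornerProj_coe (m : f.corner M) : f.cornerProj M m = m := Subtype.ext m.2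

lemma cornerProj_eq_zero {T : Type*} [Semiring T] {g : T →ₙ+* R} (h : f 1 * g 1 = 0)
    (m : g.corner M) : f.cornerProj M m = 0 :=
  Subtype.ext (by rw [coe_cornerProj, ← mem_corner.mp m.2, ← mul_smul, h, zero_smul]; rfl)

variable {N : Type*} [AddCommGroup N] [Module R N]

variable (f) in
def cornerMap (φ : M →ₗ[R] N) : f.corner M →ₗ[S] f.corner N where
  toFun m := ⟨φ (m : M), by rw [mem_corner, ← map_smul, mem_corner.mp m.2]⟩
  map_add' m n := Subtype.ext (map_add φ (m : M) n)
  map_smul' s m := Subtype.ext (map_smul φ (f s) (m : M))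

@[simp] lemma coe_cornerMap (φ : M →ₗ[R] N) (m : f.corner M) :
    (f.cornerMap φ m : N) = φ m := rfl

end NonUnitalRingHom

namespace OPE

section generators

variable {A : Type u} [CommRing A] {V : Type u} [AddCommGroup V]

variable (A) in
def ofMod : V →+ OPE A V where
  toFun v := (0, v, 0)
  map_zero' := rfl
  map_add' v w := by simp

lemma ofMod_apply (v : V) : ofMod A v = (0, v, 0) := rfl

variable [Algebra ℂ A] [Module A V]

@[simp] lemma fst_mul (x y : OPE A V) : (x * y).1 = x.1 * y.1 := rfl
@[simp] lemma snd_fst_mul (x y : OPE A V) :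
    (x * y).2.1 = x.1 • y.2.1 + algebraMap ℂ A y.2.2 • x.2.1 := rfl
@[simp] lemma snd_snd_mul (x y : OPE A V) : (x * y).2.2 = x.2.2 * y.2.2 := rfl

variable (V) in
def ofA : A →ₙ+* OPE A V where
  toFun a := (a, 0, 0)
  map_mul' a b := by simp [Prod.ext_iff]
  map_zero' := rfl
  map_add' a b := by simp

lemma ofA_apply (a : A) : ofA V a = (a, 0, 0) := rfl

variable (A V) in
def ofC : ℂ →ₙ+* OPE A V where
  toFun c := (0, 0, c)
  map_mul' c d := by simp [Prod.ext_iff]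
  map_zero' := rfl
  map_add' c d := by simp

lemma ofC_apply (c : ℂ) : ofC A V c = (0, 0, c) := rfl

lemma ofA_add_ofMod_add_ofC (x : OPE A V) : ofA V x.1 + ofMod A x.2.1 + ofC A V x.2.2 = x := by
  simp [ofA_apply, ofMod_apply, ofC_apply]

lemma ofA_one_add_ofC_one : ofA V (1 : A) + ofC A V 1 = 1 := by
  simp only [ofA_apply, ofC_apply, Prod.mk_add_mk, add_zero, zero_add]; rfl

lemma ofA_mul_ofA (a b : A) : ofA V a * ofA V b = ofA V (a * b) := (map_mul _ a b).symm

lemma ofC_mul_ofC (c d : ℂ) : ofC A V c * ofC A V d = ofC A V (c * d) := (map_mul _ c d).symm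

@[simp] lemma ofA_mul_ofMod (a : A) (v : V) : ofA V a * ofMod A v = ofMod A (a • v) := by
  simp [Prod.ext_iff, ofA_apply, ofMod_apply]

@[simp] lemma ofMod_mul_ofC (v : V) (c : ℂ) :
    ofMod A v * ofC A V c = ofMod A (algebraMap ℂ A c • v) := by
  simp [Prod.ext_iff, ofC_apply, ofMod_apply]

@[simp] lemma ofA_mul_ofC (a : A) (c : ℂ) : ofA V a * ofC A V c = 0 := by
  simp [Prod.ext_iff, ofA_apply, ofC_apply]

@[simp] lemma ofC_mul_ofA (c : ℂ) (a : A) : ofC A V c * ofA V a = 0 := by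
  simp [Prod.ext_iff, ofA_apply, ofC_apply]

@[simp] lemma ofC_mul_ofMod (c : ℂ) (v : V) : ofC A V c * ofMod A v = 0 := by
  simp [Prod.ext_iff, ofC_apply, ofMod_apply]

lemma map_smul_of_generators {M N : Type u} [AddCommGroup M] [Module (OPE A V) M]
    [AddCommGroup N] [Module (OPE A V) N] (f : M →+ N)
    (hA : ∀ (a : A) m, f (ofA V a • m) = ofA V a • f m)
    (hV : ∀ (v : V) m, f (ofMod A v • m) = ofMod A v • f m)
    (hC : ∀ (c : ℂ) m, f (ofC A V c • m) = ofC A V c • f m) (r : OPE A V) (m : M) :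
    f (r • m) = r • f m := by
  rw [← ofA_add_ofMod_add_ofC r]
  simp only [add_smul, map_add, hA, hV, hC]

end generators

variable {A : Type u} [CommRing A] [Algebra ℂ A]

section parts

variable (A) (V : Type u) [AddCommGroup V] [Module A V]
variable (M : Type u) [AddCommGroup M] [Module (OPE A V) M]

abbrev partA : AddSubgroup M := (ofA V : A →ₙ+* OPE A V).corner M

abbrev partInf : AddSubgroup M := (ofC A V).corner M

def pairing : partInf A V M →+ V →ₗ[A] partA A V M where
  toFun q :=
    { toFun v := ⟨ofMod A v • (q : M), by
        rw [NonUnitalRingHom.mem_corner, ← mul_smul, ofA_mul_ofMod, one_smul]⟩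
      map_add' v w := Subtype.ext (by simp [add_smul])
      map_smul' a v := Subtype.ext (by simp [← mul_smul]) }
  map_zero' := by ext; simp
  map_add' q r := by ext; simp

@[simp] lemma coe_pairing_apply (q : partInf A V M) (v : V) :
    (pairing A V M q v : M) = ofMod A v • (q : M) := rfl

end parts

abbrev moduleOfPairing {W P Q : Type u} [AddCommGroup W] [Module A W] [AddCommGroup P]
    [Module A P] [AddCommGroup Q] [Module ℂ Q] (μ : Q →+ W →ₗ[A] P)
    (hμ : ∀ (c : ℂ) q w, μ (c • q) w = μ q (algebraMap ℂ A c • w)) :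
    Module (OPE A W) (P × Q) where
  smul s p := (s.1 • p.1 + μ p.2 s.2.1, s.2.2 • p.2)
  one_smul p := by
    show ((1 : A) • p.1 + μ p.2 0, (1 : ℂ) • p.2) = p
    simp
  mul_smul s t p := by
    show ((s * t).1 • p.1 + μ p.2 (s * t).2.1, (s * t).2.2 • p.2) =
      (s.1 • (t.1 • p.1 + μ p.2 t.2.1) + μ (t.2.2 • p.2) s.2.1, s.2.2 • t.2.2 • p.2)
    simp only [fst_mul, snd_fst_mul, snd_snd_mul, map_add, map_smul, hμ, mul_smul, smul_add]
    ext <;> simp only [add_assoc]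
  smul_zero s := by
    show (s.1 • (0 : P) + μ 0 s.2.1, s.2.2 • (0 : Q)) = 0
    simp
  smul_add s p q := by
    show (s.1 • (p.1 + q.1) + μ (p.2 + q.2) s.2.1, s.2.2 • (p.2 + q.2)) =
      (s.1 • p.1 + μ p.2 s.2.1, s.2.2 • p.2) + (s.1 • q.1 + μ q.2 s.2.1, s.2.2 • q.2)
    simp only [smul_add, map_add, LinearMap.add_apply, Prod.mk_add_mk]
    abel_nf
  add_smul s t p := by
    show ((s.1 + t.1) • p.1 + μ p.2 (s.2.1 + t.2.1), (s.2.2 + t.2.2) • p.2) =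
      (s.1 • p.1 + μ p.2 s.2.1, s.2.2 • p.2) + (t.1 • p.1 + μ p.2 t.2.1, t.2.2 • p.2)
    simp only [add_smul, map_add, Prod.mk_add_mk]
    abel_nf
  zero_smul p := by
    show ((0 : A) • p.1 + μ p.2 0, (0 : ℂ) • p.2) = 0
    simp

section transfer

variable {V W X : Type u} [AddCommGroup V] [Module A V] [AddCommGroup W] [Module A W]
  [AddCommGroup X] [Module A X]
variable (β : X →ₗ[A] W →ₗ[A] V) (M : Type u) [AddCommGroup M] [Module (OPE A V) M]

def transferPairing : partInf A V M →+ W →ₗ[A] X →ₗ[A] partA A V M where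
  toFun q := β.flip.compr₂ (pairing A V M q)
  map_zero' := by ext; simp
  map_add' q r := by ext; simp

@[simp] lemma transferPairing_apply (q : partInf A V M) (w : W) (x : X) :
    transferPairing β M q w x = pairing A V M q (β x w) := rfl

lemma transferPairing_smul (c : ℂ) (q : partInf A V M) (w : W) :
    transferPairing β M (c • q) w = transferPairing β M q (algebraMap ℂ A c • w) := by
  ext x
  simp [← mul_smul]

@[ext]
structure Transfer (_β : X →ₗ[A] W →ₗ[A] V) (M : Type u) [AddCommGroup M]
    [Module (OPE A V) M] where
  fst : X →ₗ[A] partA A V M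
  snd : partInf A V M

def Transfer.equivProd : Transfer β M ≃ (X →ₗ[A] partA A V M) × partInf A V M where
  toFun p := (p.fst, p.snd)
  invFun p := ⟨p.1, p.2⟩

instance : AddCommGroup (Transfer β M) := (Transfer.equivProd β M).addCommGroup

instance : Module (OPE A W) (Transfer β M) :=
  letI := moduleOfPairing (transferPairing β M) (transferPairing_smul β M)
  (Transfer.equivProd β M).module (OPE A W)

variable {β M}

namespace Transfer

@[simp] lemma fst_add (p q : Transfer β M) : (p + q).fst = p.fst + q.fst := rfl
@[simp] lemma snd_add (p q : Transfer β M) : (p + q).snd = p.snd + q.snd := rfl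
@[simp] lemma fst_zero : (0 : Transfer β M).fst = 0 := rfl
@[simp] lemma snd_zero : (0 : Transfer β M).snd = 0 := rfl

@[simp] lemma fst_smul (s : OPE A W) (p : Transfer β M) :
    (s • p).fst = s.1 • p.fst + transferPairing β M p.snd s.2.1 := rfl

@[simp] lemma snd_smul (s : OPE A W) (p : Transfer β M) : (s • p).snd = s.2.2 • p.snd := rfl

@[simp] lemma ofA_smul (a : A) (p : Transfer β M) : ofA W a • p = ⟨a • p.fst, 0⟩ := by
  ext <;> simp [ofA_apply]

@[simp] lemma ofMod_smul (w : W) (p : Transfer β M) :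
    ofMod A w • p = ⟨transferPairing β M p.snd w, 0⟩ := by
  ext <;> simp [ofMod_apply]

@[simp] lemma ofC_smul (c : ℂ) (p : Transfer β M) : ofC A W c • p = ⟨0, c • p.snd⟩ := by
  ext <;> simp [ofC_apply]

lemma mem_partA_iff (p : Transfer β M) : p ∈ partA A W (Transfer β M) ↔ p.snd = 0 := by
  simp [NonUnitalRingHom.mem_corner, Transfer.ext_iff, ofA_apply, eq_comm]

lemma mem_partInf_iff (p : Transfer β M) : p ∈ partInf A W (Transfer β M) ↔ p.fst = 0 := by
  simp [NonUnitalRingHom.mem_corner, Transfer.ext_iff, ofC_apply, eq_comm]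

variable (β M) in
def partAEquiv : partA A W (Transfer β M) ≃ₗ[A] (X →ₗ[A] partA A V M) where
  toFun z := (z : Transfer β M).fst
  invFun f := ⟨⟨f, 0⟩, (mem_partA_iff _).mpr rfl⟩
  map_add' _ _ := rfl
  map_smul' a z := by simp [ofA_apply]
  left_inv z := Subtype.ext (Transfer.ext rfl ((mem_partA_iff _).mp z.2).symm)
  right_inv _ := rfl

variable (β M) in
def partInfEquiv : partInf A W (Transfer β M) ≃ₗ[ℂ] partInf A V M where
  toFun z := (z : Transfer β M).snd
  invFun q := ⟨⟨0, q⟩, (mem_partInf_iff _).mpr rfl⟩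
  map_add' _ _ := rfl
  map_smul' c z := by simp [ofC_apply]
  left_inv z := Subtype.ext (Transfer.ext ((mem_partInf_iff _).mp z.2).symm rfl)
  right_inv _ := rfl

@[simp] lemma partAEquiv_apply (z : partA A W (Transfer β M)) :
    partAEquiv β M z = (z : Transfer β M).fst := rfl

@[simp] lemma fst_partAEquiv_symm (f : X →ₗ[A] partA A V M) :
    ((partAEquiv β M).symm f : Transfer β M).fst = f := rfl

@[simp] lemma snd_partAEquiv_symm (f : X →ₗ[A] partA A V M) :
    ((partAEquiv β M).symm f : Transfer β M).snd = 0 := rfl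

@[simp] lemma fst_partInfEquiv_symm (q : partInf A V M) :
    ((partInfEquiv β M).symm q : Transfer β M).fst = 0 := rfl

@[simp] lemma snd_partInfEquiv_symm (q : partInf A V M) :
    ((partInfEquiv β M).symm q : Transfer β M).snd = q := rfl

variable {N : Type u} [AddCommGroup N] [Module (OPE A V) N]

lemma cornerMap_pairing (φ : M →ₗ[OPE A V] N) (q : partInf A V M) (v : V) :
    (ofA V).cornerMap φ (pairing A V M q v) = pairing A V N ((ofC A V).cornerMap φ q) v :=
  Subtype.ext (map_smul φ _ _)

variable (β) in
def map (φ : M →ₗ[OPE A V] N) : Transfer β M →ₗ[OPE A W] Transfer β N where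
  toFun p := ⟨(ofA V).cornerMap φ ∘ₗ p.fst, (ofC A V).cornerMap φ p.snd⟩
  map_add' p q := Transfer.ext (LinearMap.comp_add _ _ _) (map_add _ _ _)
  map_smul' s p := by
    refine Transfer.ext ?_ (map_smul _ _ _)
    ext x
    simp [cornerMap_pairing]

@[simp] lemma fst_map (φ : M →ₗ[OPE A V] N) (p : Transfer β M) :
    (map β φ p).fst = (ofA V).cornerMap φ ∘ₗ p.fst := rfl

@[simp] lemma snd_map (φ : M →ₗ[OPE A V] N) (p : Transfer β M) :
    (map β φ p).snd = (ofC A V).cornerMap φ p.snd := rfl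

end Transfer

open CategoryTheory in
def transferFunctor (β : X →ₗ[A] W →ₗ[A] V) :
    ModuleCat.{u} (OPE A V) ⥤ ModuleCat.{u} (OPE A W) where
  obj M := ModuleCat.of _ (Transfer β M)
  map φ := ModuleCat.ofHom (Transfer.map β φ.hom)

end transfer

end OPE

open TensorProduct

structure MoritaContext (A V W X Y : Type u) [CommRing A] [AddCommGroup V] [Module A V]
    [AddCommGroup W] [Module A W] [AddCommGroup X] [Module A X] [AddCommGroup Y]
    [Module A Y] where
  actX : X →ₗ[A] W →ₗ[A] V
  actY : Y →ₗ[A] V →ₗ[A] W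
  pair : X →ₗ[A] Y →ₗ[A] A
  actX_actY (x : X) (y : Y) (v : V) : actX x (actY y v) = pair x y • v
  actY_actX (x : X) (y : Y) (w : W) : actY y (actX x w) = pair x y • w
  pair_smul_left (x x' : X) (y : Y) : pair x y • x' = pair x' y • x
  pair_smul_right (x : X) (y y' : Y) : pair x y • y' = pair x y' • y
  lift_pair_surjective : Function.Surjective (lift pair)

namespace MoritaContext

section algebra

variable {A : Type u} [CommRing A]
variable {V W X Y : Type u} [AddCommGroup V] [Module A V] [AddCommGroup W] [Module A W]
  [AddCommGroup X] [Module A X] [AddCommGroup Y] [Module A Y]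
variable (C : MoritaContext A V W X Y)

def symm : MoritaContext A W V Y X where
  actX := C.actY
  actY := C.actX
  pair := C.pair.flip
  actX_actY y x w := C.actY_actX x y w
  actY_actX y x v := C.actX_actY x y v
  pair_smul_left y y' x := C.pair_smul_right x y y'
  pair_smul_right y x x' := C.pair_smul_left x x' y
  lift_pair_surjective := by
    rw [← lift_comp_comm_eq]
    exact C.lift_pair_surjective.comp (TensorProduct.comm A Y X).surjective

lemma pair_smul_lift {N : Type u} [AddCommGroup N] [Module A N] (f : X →ₗ[A] Y →ₗ[A] N)
    (x : X) (y : Y) (t : X ⊗[A] Y) : C.pair x y • lift f t = lift C.pair t • f x y := by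
  induction t using TensorProduct.induction_on with
  | zero => simp
  | tmul x' y' =>
    calc C.pair x y • f x' y' = f (C.pair x' y • x) y' := by
          rw [← C.pair_smul_left, LinearMap.map_smul₂]
      _ = f x (C.pair x' y' • y) := by
          rw [LinearMap.map_smul₂, ← map_smul, C.pair_smul_right]
      _ = lift C.pair (x' ⊗ₜ y') • f x y := by simp
  | add t t' ht ht' => simp [smul_add, add_smul, ht, ht']

noncomputable def unitTensor : X ⊗[A] Y := (C.lift_pair_surjective 1).choose

lemma lift_pair_unitTensor : lift C.pair C.unitTensor = 1 :=
  (C.lift_pair_surjective 1).choose_spec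

end algebra

open OPE

variable {A : Type u} [CommRing A] [Algebra ℂ A]
variable {V W X Y : Type u} [AddCommGroup V] [Module A V] [AddCommGroup W] [Module A W]
  [AddCommGroup X] [Module A X] [AddCommGroup Y] [Module A Y]
variable (C : MoritaContext A V W X Y)

section unit

variable (M : Type u) [AddCommGroup M] [Module (OPE A V) M]

def unitHom : M →+ Transfer C.actY (Transfer C.actX M) where
  toFun m :=
    ⟨(Transfer.partAEquiv C.actX M).symm.toLinearMap ∘ₗ
        (C.pair.compr₂ (LinearMap.toSpanSingleton A _ ((ofA V).cornerProj M m))).flip,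
      (Transfer.partInfEquiv C.actX M).symm ((ofC A V).cornerProj M m)⟩
  map_zero' := by ext <;> simp
  map_add' m n := by ext <;> simp

lemma unitHom_smul (r : OPE A V) (m : M) : C.unitHom M (r • m) = r • C.unitHom M m := by
  refine map_smul_of_generators (C.unitHom M) (fun a m => ?_) (fun v m => ?_) (fun c m => ?_) r m
  · ext <;> simp [unitHom, ← mul_smul, ofA_mul_ofA, -map_mul, mul_comm]
  · ext <;> simp [unitHom, ← mul_smul, C.actX_actY]
  · ext <;> simp [unitHom, ← mul_smul, ofC_mul_ofC, -map_mul, mul_comm]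

variable {C M}

@[simp] lemma unitHom_fst_apply (m : M) (y : Y) (x : X) :
    ((C.unitHom M m).fst y : Transfer C.actX M).fst x = C.pair x y • (ofA V).cornerProj M m :=
  rfl

@[simp] lemma partInfEquiv_unitHom (m : M) :
    Transfer.partInfEquiv C.actX M (C.unitHom M m).snd = (ofC A V).cornerProj M m :=
  rfl

noncomputable def unitInv (p : Transfer C.actY (Transfer C.actX M)) : M :=
  (lift ((Transfer.partAEquiv C.actX M).toLinearMap ∘ₗ p.fst).flip C.unitTensor : M) +
    (Transfer.partInfEquiv C.actX M p.snd : M)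

lemma unitInv_unitHom (m : M) : unitInv (C.unitHom M m) = m := by
  have h : (Transfer.partAEquiv C.actX M).toLinearMap ∘ₗ (C.unitHom M m).fst =
      (C.pair.compr₂ (LinearMap.toSpanSingleton A _ ((ofA V).cornerProj M m))).flip := by
    ext; simp
  rw [unitInv, h, LinearMap.flip_flip, lift_compr₂, LinearMap.comp_apply,
    C.lift_pair_unitTensor, LinearMap.toSpanSingleton_apply_one, partInfEquiv_unitHom,
    NonUnitalRingHom.coe_cornerProj, NonUnitalRingHom.coe_cornerProj, ← add_smul,
    ofA_one_add_ofC_one, one_smul]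

lemma unitHom_unitInv (p : Transfer C.actY (Transfer C.actX M)) :
    C.unitHom M (unitInv p) = p := by
  set ev := ((Transfer.partAEquiv C.actX M).toLinearMap ∘ₗ p.fst).flip
  have hA : (ofA V).cornerProj M (unitInv p) = lift ev C.unitTensor := by
    rw [unitInv, map_add, NonUnitalRingHom.cornerProj_coe,
      NonUnitalRingHom.cornerProj_eq_zero (by simp), add_zero]
  have hC : (ofC A V).cornerProj M (unitInv p) = Transfer.partInfEquiv C.actX M p.snd := by
    rw [unitInv, map_add, NonUnitalRingHom.cornerProj_coe,
      NonUnitalRingHom.cornerProj_eq_zero (by simp), zero_add]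
  refine Transfer.ext (LinearMap.ext fun y => (Transfer.partAEquiv C.actX M).injective
    (LinearMap.ext fun x => ?_)) ((Transfer.partInfEquiv C.actX M).injective ?_)
  · rw [Transfer.partAEquiv_apply, unitHom_fst_apply, hA, C.pair_smul_lift,
      C.lift_pair_unitTensor, one_smul]
    rfl
  · rw [partInfEquiv_unitHom, hC]

variable (C M) in
noncomputable def unitEquiv : M ≃ₗ[OPE A V] Transfer C.actY (Transfer C.actX M) :=
  { C.unitHom M with
    map_smul' := C.unitHom_smul M
    invFun := unitInv
    left_inv := unitInv_unitHom
    right_inv := unitHom_unitInv }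

lemma unitHom_naturality {N : Type u} [AddCommGroup N] [Module (OPE A V) N]
    (φ : M →ₗ[OPE A V] N) (m : M) :
    Transfer.map C.actY (Transfer.map C.actX φ) (C.unitHom M m) = C.unitHom N (φ m) := by
  ext <;> simp [unitHom]

end unit

open CategoryTheory

noncomputable def unitIso :
    𝟭 (ModuleCat.{u} (OPE A V)) ≅ transferFunctor C.actX ⋙ transferFunctor C.actY :=
  NatIso.ofComponents (fun M => (C.unitEquiv M).toModuleIso)
    (fun φ => by ext m; exact (unitHom_naturality φ.hom m).symm)

noncomputable def opeEquivalence : ModuleCat.{u} (OPE A V) ≌ ModuleCat.{u} (OPE A W) :=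
  CategoryTheory.Equivalence.mk (transferFunctor C.actX) (transferFunctor C.actY) C.unitIso
    C.symm.unitIso.symm

end MoritaContext

namespace Ideal

variable {A : Type u} [CommRing A]

lemma exists_mul_eq_span_singleton [IsDedekindDomain A] {I : Ideal A} (hI : I ≠ ⊥) :
    ∃ d ≠ (0 : A), ∃ I' : Ideal A, I * I' = span {d} := by
  obtain ⟨d, hdI, hd⟩ := Submodule.exists_mem_ne_zero_of_ne_bot hI
  obtain ⟨I', hI'⟩ := dvd_iff_le.mpr ((span_singleton_le_iff_mem I).mpr hdI)
  exact ⟨d, hd, I', hI'.symm⟩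

variable {I J I' J' : Ideal A} {d e : A}

lemma mul_le_span_singleton_mul (hJ : J * J' = span {d}) : I * J' * J ≤ span {d} * I := by
  rw [← hJ, mul_comm J, mul_comm _ I, mul_assoc]

lemma mul_mul_mul_eq_span_singleton (hJ : J * J' = span {d}) (hI : I * I' = span {e}) :
    I * J' * (J * I') = span {d * e} := by
  rw [← span_singleton_mul_span_singleton, ← hJ, ← hI]
  ring

variable [IsDomain A]

noncomputable def mulDiv (hd : d ≠ 0) {P Q R : Ideal A} (h : P * Q ≤ span {d} * R) :
    P →ₗ[A] Q →ₗ[A] R :=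
  LinearMap.codRestrict₂ ((LinearMap.mul A A).compl₁₂ P.subtype Q.subtype) (d • R.subtype)
    ((mul_right_injective₀ hd).comp Subtype.val_injective)
    (fun p q => by
      obtain ⟨r, hr, hdr⟩ := Submodule.mem_span_singleton_mul.mp (h (mul_mem_mul p.2 q.2))
      exact ⟨⟨r, hr⟩, hdr⟩)

lemma mul_mulDiv (hd : d ≠ 0) {P Q R : Ideal A} (h : P * Q ≤ span {d} * R) (p : P) (q : Q) :
    d * (mulDiv hd h p q : A) = p * q :=
  LinearMap.codRestrict₂_apply (i := d • R.subtype) _ _ _ p q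

variable (hd : d ≠ 0) (he : e ≠ 0) (hJ : J * J' = span {d}) (hI : I * I' = span {e})

noncomputable def moritaPair : ↥(I * J') →ₗ[A] ↥(J * I') →ₗ[A] A :=
  (mulDiv (mul_ne_zero hd he) (by rw [mul_top, mul_mul_mul_eq_span_singleton hJ hI])).compr₂
    Submodule.topEquiv.toLinearMap

lemma mul_moritaPair (x : I * J') (y : J * I') : d * e * moritaPair hd he hJ hI x y = x * y :=
  mul_mulDiv _ _ x y

lemma lift_moritaPair_surjective : Function.Surjective (lift (moritaPair hd he hJ hI)) := by
  have hmem : d * e ∈ I * J' * (J * I') := by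
    rw [mul_mul_mul_eq_span_singleton hJ hI]
    exact mem_span_singleton_self _
  obtain ⟨t, ht⟩ : ∃ t, d * e * lift (moritaPair hd he hJ hI) t = d * e := by
    refine Submodule.mul_induction_on
      (C := fun r => ∃ t, d * e * lift (moritaPair hd he hJ hI) t = r)
      hmem (fun x hx y hy => ⟨⟨x, hx⟩ ⊗ₜ ⟨y, hy⟩, ?_⟩) ?_
    · rw [lift.tmul, mul_moritaPair]
    · rintro _ _ ⟨t, rfl⟩ ⟨t', rfl⟩
      exact ⟨t + t', by rw [map_add, mul_add]⟩
  have ht₁ : lift (moritaPair hd he hJ hI) t = 1 :=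
    mul_left_cancel₀ (mul_ne_zero hd he) (ht.trans (mul_one _).symm)
  exact fun a => ⟨a • t, by rw [map_smul, ht₁, smul_eq_mul, mul_one]⟩

noncomputable def moritaContext : MoritaContext A I J ↥(I * J') ↥(J * I') where
  actX := mulDiv hd (mul_le_span_singleton_mul hJ)
  actY := mulDiv he (mul_le_span_singleton_mul hI)
  pair := moritaPair hd he hJ hI
  actX_actY x y v := Subtype.ext <| mul_left_cancel₀ (mul_ne_zero hd he) <| by
    have h₁ := mul_mulDiv hd (mul_le_span_singleton_mul hJ) x
      (mulDiv he (mul_le_span_singleton_mul hI) y v)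
    have h₂ := mul_mulDiv he (mul_le_span_singleton_mul hI) y v
    have h₃ := mul_moritaPair hd he hJ hI x y
    simp only [Submodule.coe_smul, smul_eq_mul]
    linear_combination e * h₁ + (x : A) * h₂ - (v : A) * h₃
  actY_actX x y w := Subtype.ext <| mul_left_cancel₀ (mul_ne_zero hd he) <| by
    have h₁ := mul_mulDiv he (mul_le_span_singleton_mul hI) y
      (mulDiv hd (mul_le_span_singleton_mul hJ) x w)
    have h₂ := mul_mulDiv hd (mul_le_span_singleton_mul hJ) x w
    have h₃ := mul_moritaPair hd he hJ hI x y
    simp only [Submodule.coe_smul, smul_eq_mul]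
    linear_combination d * h₁ + (y : A) * h₂ - (w : A) * h₃
  pair_smul_left x x' y := Subtype.ext <| mul_left_cancel₀ (mul_ne_zero hd he) <| by
    have h₁ := mul_moritaPair hd he hJ hI x y
    have h₂ := mul_moritaPair hd he hJ hI x' y
    simp only [Submodule.coe_smul, smul_eq_mul]
    linear_combination (x' : A) * h₁ - (x : A) * h₂
  pair_smul_right x y y' := Subtype.ext <| mul_left_cancel₀ (mul_ne_zero hd he) <| by
    have h₁ := mul_moritaPair hd he hJ hI x y
    have h₂ := mul_moritaPair hd he hJ hI x y'
    simp only [Submodule.coe_smul, smul_eq_mul]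
    linear_combination (y' : A) * h₁ - (y : A) * h₂
  lift_pair_surjective := lift_moritaPair_surjective hd he hJ hI

end Ideal

open CategoryTheory in
theorem stmt10_general (A : Type u) [CommRing A] [IsDedekindDomain A] [Algebra ℂ A]
    (I J : Ideal A) (hI : I ≠ ⊥) (hJ : J ≠ ⊥) :
    ∃ e : ModuleCat.{u} (OPE A ↥I) ≌ ModuleCat.{u} (OPE A ↥J), e.functor.Additive := by
  obtain ⟨d, hd, J', hJ'⟩ := Ideal.exists_mul_eq_span_singleton hJ
  obtain ⟨e, he, I', hI'⟩ := Ideal.exists_mul_eq_span_singleton hI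
  let E := (Ideal.moritaContext hd he hJ' hI').opeEquivalence
  exact ⟨E, E.functor.additive_of_preserves_binary_products⟩

open CategoryTheory in
/-- Let `A` be the coordinate ring of a smooth affine irreducible
curve over ℂ (an integral domain, finitely generated as a ℂ-algebra, which is a
Dedekind domain) and let `I`, `J` be nonzero ideals of `A`.  Then the one-point
extensions `A[I]` and `A[J]` are Morita equivalent: the categories of left modules
are equivalent via an additive functor. -/
theorem stmt10 (A : Type u) [CommRing A] [IsDomain A] [IsDedekindDomain A] [Algebra ℂ A]
    (hfg : Algebra.FiniteType ℂ A)
    (I J : Ideal A) (hI : I ≠ ⊥) (hJ : J ≠ ⊥) :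
    ∃ e : ModuleCat.{u} (OPE A ↥I) ≌ ModuleCat.{u} (OPE A ↥J), e.functor.Additive :=
  stmt10_general A I J hI hJ
end

section
/- Let A be an integral domain which is finitely generated as a ℂ-algebra and is a Dedekind domain, and let I and J be nonzero ideals of A. Then A[I] and A[J] are isomorphic as ℂ-algebras if and only if there exist a ℂ-algebra automorphism τ of A and an additive bijection g: I → J satisfying g(a·m) = τ(a)·g(m) for all a ∈ A and m ∈ I (that is, J is isomorphic to the twist I^τ of I by τ). -/
universe u

/-! An isomorphism `φ : A[M] ≃ₐ[ℂ] A[N]` sends the idempotent `e = (1,0,0)` to an idempotent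
other than `0` and `1`; as `A` is a domain, the diagonal of `φ e` is `(1,0)` or `(0,1)`.
In the first case `φ` maps the corner `e A[M] e = A` isomorphically onto the corner of `φ e`,
which the first coordinate identifies with `A`: this is `τ`. The square-zero elements are
exactly the `(0,m,0)`, so `φ` restricts to an additive bijection `g : M ≃ N`, and
`(a,0,0) (0,m,0) = (0,a•m,0)` makes `g` `τ`-semilinear. In the second case the third coordinate
identifies the corner with `ℂ`, so `A ≅ ℂ` is a field and its nonzero ideals coincide.
Conversely `(a,m,c) ↦ (τ a, g m, c)` is an isomorphism `A[M] ≃ A[N]`. -/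

namespace OPE

variable {A : Type u} [CommRing A] [Algebra ℂ A]
  {M N : Type u} [AddCommGroup M] [Module A M] [AddCommGroup N] [Module A N]

lemma mul_def (x y : OPE A M) :
    x * y = (x.1 * y.1, x.1 • y.2.1 + algebraMap ℂ A y.2.2 • x.2.1, x.2.2 * y.2.2) := rfl

lemma algebraMap_apply (z : ℂ) : algebraMap ℂ (OPE A M) z = (algebraMap ℂ A z, 0, z) := rfl

def fstHom : OPE A M →ₐ[ℂ] A where
  toFun x := x.1
  map_one' := rfl
  map_mul' _ _ := rfl
  map_zero' := rfl
  map_add' _ _ := rfl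
  commutes' _ := rfl

def thdHom : OPE A M →ₐ[ℂ] ℂ where
  toFun x := x.2.2
  map_one' := rfl
  map_mul' _ _ := rfl
  map_zero' := rfl
  map_add' _ _ := rfl
  commutes' _ := rfl

def inl : A →ₗ[ℂ] OPE A M where
  toFun a := (a, 0, 0)
  map_add' a b := by ext <;> simp
  map_smul' z a := by
    show _ = algebraMap ℂ (OPE A M) z * (a, 0, 0)
    ext <;> simp [mul_def, algebraMap_apply, Algebra.smul_def]

lemma inl_apply (a : A) : (inl a : OPE A M) = (a, 0, 0) := rfl

lemma inl_injective : Function.Injective (inl : A →ₗ[ℂ] OPE A M) := fun _ _ h => congr($h.1)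

lemma inl_mul (a b : A) : (inl (a * b) : OPE A M) = inl a * inl b := by
  ext <;> simp [inl_apply, mul_def]

lemma inl_mul_mid (a : A) (m : M) : inl a * ((0, m, 0) : OPE A M) = (0, a • m, 0) := by
  ext <;> simp [inl_apply, mul_def]

lemma inl_fst (x : OPE A M) : inl x.1 = e * x * e := by
  ext <;> simp [inl_apply, mul_def, e]

lemma mul_self_eq_zero_iff [NoZeroDivisors A] {x : OPE A M} :
    x * x = 0 ↔ x.1 = 0 ∧ x.2.2 = 0 := by
  refine ⟨fun h => ⟨mul_self_eq_zero.mp congr($h.1), mul_self_eq_zero.mp congr($h.2.2)⟩, ?_⟩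
  rintro ⟨h1, h3⟩
  ext <;> simp [mul_def, h1, h3]

lemma fst_thd_of_isIdempotentElem [IsDomain A] {p : OPE A M} (hp : IsIdempotentElem p)
    (h0 : p ≠ 0) (h1 : p ≠ 1) : p.1 = 1 ∧ p.2.2 = 0 ∨ p.1 = 0 ∧ p.2.2 = 1 := by
  have hfst : p.1 = 0 ∨ p.1 = 1 := IsIdempotentElem.iff_eq_zero_or_one.mp (hp.map fstHom)
  have hthd : p.2.2 = 0 ∨ p.2.2 = 1 := IsIdempotentElem.iff_eq_zero_or_one.mp (hp.map thdHom)
  rcases hfst with hfst | hfst <;> rcases hthd with hthd | hthd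
  · exact absurd (hp.symm.trans (mul_self_eq_zero_iff.mpr ⟨hfst, hthd⟩)) h0
  · exact Or.inr ⟨hfst, hthd⟩
  · exact Or.inl ⟨hfst, hthd⟩
  · have hq : (1 - p) * (1 - p) = 0 :=
      mul_self_eq_zero_iff.mpr ⟨sub_eq_zero.mpr hfst.symm, sub_eq_zero.mpr hthd.symm⟩
    exact absurd (sub_eq_zero.mp (hp.one_sub.symm.trans hq)).symm h1

lemma mul_mul_eq_of_fst_eq_one {p : OPE A M} (h1 : p.1 = 1) (h3 : p.2.2 = 0) (y : OPE A M) :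
    p * y * p = (y.1, y.1 • p.2.1, 0) := by
  ext <;> simp [mul_def, h1, h3]

lemma mul_mul_eq_of_thd_eq_one {p : OPE A M} (h1 : p.1 = 0) (h3 : p.2.2 = 1) (y : OPE A M) :
    p * y * p = (0, algebraMap ℂ A y.2.2 • p.2.1, y.2.2) := by
  ext <;> simp [mul_def, h1, h3]

variable {B : Type*} [Ring B] [Algebra ℂ B]

def compInl (ψ : OPE A M →ₐ[ℂ] B) (h : ψ e = 1) : A →ₐ[ℂ] B :=
  AlgHom.ofLinearMap (ψ.toLinearMap ∘ₗ inl) h fun a b => by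
    simp only [LinearMap.comp_apply, AlgHom.toLinearMap_apply, inl_mul, map_mul]

lemma map_inl_fst_symm (φ : OPE A M ≃ₐ[ℂ] OPE A N) (y : OPE A N) :
    φ (inl (φ.symm y).1) = φ e * y * φ e := by
  rw [inl_fst, map_mul, map_mul, φ.apply_symm_apply]

lemma map_inl (φ : OPE A M ≃ₐ[ℂ] OPE A N) (a : A) : φ (inl a) = φ e * φ (inl a) * φ e := by
  simpa [inl_apply] using map_inl_fst_symm φ (φ (inl a))

theorem isField_of_map_e_thd_eq_one (φ : OPE A M ≃ₐ[ℂ] OPE A N) (h1 : (φ e).1 = 0)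
    (h3 : (φ e).2.2 = 1) : IsField A := by
  let θ : A →ₐ[ℂ] ℂ := compInl (thdHom.comp φ.toAlgHom) h3
  have hinj : Function.Injective θ := by
    refine (injective_iff_map_eq_zero θ).mpr fun a (ha : (φ (inl a)).2.2 = 0) => ?_
    have : φ (inl a) = 0 := by
      rw [map_inl, mul_mul_eq_of_thd_eq_one h1 h3, ha, map_zero, zero_smul]; rfl
    exact (map_eq_zero_iff _ inl_injective).mp ((map_eq_zero_iff φ φ.injective).mp this)
  have hsurj : Function.Surjective θ := fun z => ⟨(φ.symm (algebraMap ℂ _ z)).1,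
    show (φ (inl _)).2.2 = z by rw [map_inl_fst_symm, mul_mul_eq_of_thd_eq_one h1 h3]; rfl⟩
  exact (AlgEquiv.ofBijective θ ⟨hinj, hsurj⟩).toMulEquiv.isField (Field.toIsField ℂ)

section NoZeroDivisors

variable [NoZeroDivisors A]

lemma eq_mid_of_mul_self_eq_zero {x : OPE A M} (h : x * x = 0) : x = (0, x.2.1, 0) := by
  obtain ⟨h1, h3⟩ := mul_self_eq_zero_iff.mp h
  ext <;> simp [h1, h3]

lemma map_mid (φ : OPE A M ≃ₐ[ℂ] OPE A N) (m : M) : φ (0, m, 0) = (0, (φ (0, m, 0)).2.1, 0) :=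
  eq_mid_of_mul_self_eq_zero (by rw [← map_mul, mul_self_eq_zero_iff.mpr ⟨rfl, rfl⟩, map_zero])

def midEquiv (φ : OPE A M ≃ₐ[ℂ] OPE A N) : M ≃+ N where
  toFun m := (φ (0, m, 0)).2.1
  invFun n := (φ.symm (0, n, 0)).2.1
  left_inv m := by simp only [← map_mid, AlgEquiv.symm_apply_apply]
  right_inv n := by simp only [← map_mid, AlgEquiv.apply_symm_apply]
  map_add' m m' := by simpa using congr($(map_add φ ((0, m, 0) : OPE A M) (0, m', 0)).2.1)

@[simp] lemma midEquiv_apply (φ : OPE A M ≃ₐ[ℂ] OPE A N) (m : M) :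
    midEquiv φ m = (φ (0, m, 0)).2.1 := rfl

lemma midEquiv_smul (φ : OPE A M ≃ₐ[ℂ] OPE A N) (a : A) (m : M) :
    midEquiv φ (a • m) = (φ (inl a)).1 • midEquiv φ m := by
  have h := congr($(map_mul φ (inl a) (0, m, 0)).2.1)
  rw [inl_mul_mid, map_mid φ m] at h
  simpa [mul_def] using h

theorem exists_twist_of_map_e_fst_eq_one (φ : OPE A M ≃ₐ[ℂ] OPE A N) (h1 : (φ e).1 = 1)
    (h3 : (φ e).2.2 = 0) :
    ∃ (τ : A ≃ₐ[ℂ] A) (g : M ≃+ N), ∀ (a : A) (m : M), g (a • m) = τ a • g m := by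
  let τ : A →ₐ[ℂ] A := compInl (fstHom.comp φ.toAlgHom) h1
  have hinj : Function.Injective τ := by
    refine (injective_iff_map_eq_zero τ).mpr fun a (ha : (φ (inl a)).1 = 0) => ?_
    have : φ (inl a) = 0 := by rw [map_inl, mul_mul_eq_of_fst_eq_one h1 h3, ha, zero_smul]; rfl
    exact (map_eq_zero_iff _ inl_injective).mp ((map_eq_zero_iff φ φ.injective).mp this)
  have hsurj : Function.Surjective τ := fun a => ⟨(φ.symm (inl a)).1,
    show (φ (inl _)).1 = a by rw [map_inl_fst_symm, mul_mul_eq_of_fst_eq_one h1 h3]; rfl⟩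
  exact ⟨AlgEquiv.ofBijective τ ⟨hinj, hsurj⟩, midEquiv φ, midEquiv_smul φ⟩

end NoZeroDivisors

section IsDomain

variable [IsDomain A]

lemma map_e_fst_thd (φ : OPE A M ≃ₐ[ℂ] OPE A N) :
    (φ e).1 = 1 ∧ (φ e).2.2 = 0 ∨ (φ e).1 = 0 ∧ (φ e).2.2 = 1 := by
  have he : IsIdempotentElem (e : OPE A M) := by ext <;> simp [mul_def, e]
  refine fst_thd_of_isIdempotentElem (he.map φ) ?_ ?_
  · exact (map_ne_zero_iff φ φ.injective).mpr fun h => one_ne_zero congr($h.1)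
  · exact fun h => zero_ne_one (congr($(φ.injective (h.trans (map_one φ).symm)).2.2))

theorem exists_twist_or_isField (φ : OPE A M ≃ₐ[ℂ] OPE A N) :
    (∃ (τ : A ≃ₐ[ℂ] A) (g : M ≃+ N), ∀ (a : A) (m : M), g (a • m) = τ a • g m) ∨ IsField A := by
  rcases map_e_fst_thd φ with ⟨h1, h3⟩ | ⟨h1, h3⟩
  · exact .inl (exists_twist_of_map_e_fst_eq_one φ h1 h3)
  · exact .inr (isField_of_map_e_thd_eq_one φ h1 h3)

end IsDomain

def algEquivOfTwist (τ : A ≃ₐ[ℂ] A) (g : M ≃+ N) (hg : ∀ (a : A) (m : M), g (a • m) = τ a • g m) :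
    OPE A M ≃ₐ[ℂ] OPE A N where
  toFun x := (τ x.1, g x.2.1, x.2.2)
  invFun y := (τ.symm y.1, g.symm y.2.1, y.2.2)
  left_inv x := by simp
  right_inv y := by simp
  map_mul' x y := by
    ext
    · exact map_mul τ _ _
    · simp [mul_def, hg]
    · rfl
  map_add' x y := by ext <;> simp
  commutes' z := by ext <;> simp [algebraMap_apply]

end OPE

theorem stmt11_general (A : Type u) [CommRing A] [IsDomain A] [Algebra ℂ A]
    (I J : Ideal A) (hI : I ≠ ⊥) (hJ : J ≠ ⊥) :
    Nonempty (OPE A ↥I ≃ₐ[ℂ] OPE A ↥J) ↔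
      ∃ (τ : A ≃ₐ[ℂ] A) (g : ↥I ≃+ ↥J), ∀ (a : A) (m : ↥I), g (a • m) = τ a • g m := by
  refine ⟨fun ⟨φ⟩ => ?_, fun ⟨τ, g, hg⟩ => ⟨OPE.algEquivOfTwist τ g hg⟩⟩
  rcases OPE.exists_twist_or_isField φ with h | hA
  · exact h
  have := Ring.isField_iff_isSimpleOrder_ideal.mp hA
  obtain rfl : I = J :=
    ((eq_bot_or_eq_top I).resolve_left hI).trans ((eq_bot_or_eq_top J).resolve_left hJ).symm
  exact ⟨AlgEquiv.refl, AddEquiv.refl _, fun _ _ => rfl⟩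

/-- Let `A` be the coordinate ring of a smooth affine irreducible
curve over ℂ (an integral domain, finitely generated as a ℂ-algebra, which is a
Dedekind domain) and let `I`, `J` be nonzero ideals of `A`.  Then `A[I] ≅ A[J]` as
ℂ-algebras if and only if `J` is isomorphic to a twist `I^τ` of `I` by a ℂ-algebra
automorphism `τ` of `A`, i.e. there is an additive bijection `g : I → J` with
`g(a·m) = τ(a)·g(m)`. -/
theorem stmt11 (A : Type u) [CommRing A] [IsDomain A] [IsDedekindDomain A] [Algebra ℂ A]
    (hfg : Algebra.FiniteType ℂ A)
    (I J : Ideal A) (hI : I ≠ ⊥) (hJ : J ≠ ⊥) :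
    Nonempty (OPE A ↥I ≃ₐ[ℂ] OPE A ↥J) ↔
      ∃ (τ : A ≃ₐ[ℂ] A) (g : ↥I ≃+ ↥J), ∀ (a : A) (m : ↥I), g (a • m) = τ a • g m :=
  stmt11_general A I J hI hJ
end

section
/- Let n ≥ 1, let X, Y be n×n complex matrices, let v ∈ ℂⁿ be a column vector and w: ℂⁿ → ℂ a linear functional (row vector), and suppose YX − XY = Idₙ + v·w, where v·w denotes the rank-one matrix sending ξ to w(ξ)·v. Then: (a) the only subspace W ⊆ ℂⁿ satisfying XW ⊆ W, YW ⊆ W and W ⊆ ker(w) is W = 0; and (b) the only subspace W ⊆ ℂⁿ satisfying XW ⊆ W, YW ⊆ W and v ∈ W is W = ℂⁿ. (Hence the corresponding representation of dimension vector (n,1) of the deformed preprojective algebra of the framed one-loop quiver is simple.) -/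
/-!
The trace of a commutator vanishes, while the trace of the identity is the dimension. On a
subspace `W` stable under `X`, `Y` and contained in `ker w`, the relation reads `[Y, X] = 1`,
so `dim W = 0`. If instead `v ∈ W`, the rank-one term dies in `ℂⁿ ⧸ W`, where again
`[Y, X] = 1`, so the quotient is zero.
-/

open LinearMap Matrix

theorem Matrix.mulVec_mulVec_sub_of_mul_sub_mul_eq {R ι : Type*} [CommRing R] [Fintype ι]
    [DecidableEq ι] {X Y : Matrix ι ι R} {v w : ι → R}
    (h : Y * X - X * Y = 1 + vecMulVec v w) (x : ι → R) :
    Y *ᵥ (X *ᵥ x) - X *ᵥ (Y *ᵥ x) = x + (w ⬝ᵥ x) • v := by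
  rw [mulVec_mulVec, mulVec_mulVec, ← sub_mulVec, h, add_mulVec, one_mulVec,
    vecMulVec_mulVec, op_smul_eq_smul]

section Commutator

variable {K V : Type*} [Field K] [CharZero K] [AddCommGroup V] [Module K V]
  [FiniteDimensional K V]

theorem Module.End.subsingleton_of_mul_sub_mul_eq_one {f g : Module.End K V}
    (h : g * f - f * g = 1) : Subsingleton V := by
  have htrace := congrArg (trace K V) h
  rw [map_sub, trace_mul_comm, sub_self, trace_one] at htrace
  exact Module.finrank_zero_iff.mp (by exact_mod_cast htrace.symm)

theorem Submodule.eq_bot_of_commutator_eq_id_on (W : Submodule K V) {f g : Module.End K V}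
    (hf : ∀ x ∈ W, f x ∈ W) (hg : ∀ x ∈ W, g x ∈ W)
    (h : ∀ x ∈ W, g (f x) - f (g x) = x) : W = ⊥ := by
  rw [← Submodule.subsingleton_iff_eq_bot]
  refine Module.End.subsingleton_of_mul_sub_mul_eq_one (f := f.restrict hf) (g := g.restrict hg) ?_
  ext x
  exact h x x.2

theorem Submodule.eq_top_of_commutator_sub_id_mem (W : Submodule K V) {f g : Module.End K V}
    (hf : ∀ x ∈ W, f x ∈ W) (hg : ∀ x ∈ W, g x ∈ W)
    (h : ∀ x, g (f x) - f (g x) - x ∈ W) : W = ⊤ := by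
  rw [← Submodule.Quotient.subsingleton_iff]
  refine Module.End.subsingleton_of_mul_sub_mul_eq_one
    (f := W.mapQ W f hf) (g := W.mapQ W g hg) (W.linearMap_qext (LinearMap.ext fun x => ?_))
  simpa [← Submodule.Quotient.mk_sub, Submodule.Quotient.eq] using h x

end Commutator

theorem stmt16_general (n : ℕ) (X Y : Matrix (Fin n) (Fin n) ℂ)
    (v w : Fin n → ℂ)
    (h : Y * X - X * Y = 1 + Matrix.of (fun i j => v i * w j)) :
    (∀ W : Submodule ℂ (Fin n → ℂ),
        (∀ x ∈ W, X.mulVec x ∈ W) → (∀ x ∈ W, Y.mulVec x ∈ W) →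
        (∀ x ∈ W, ∑ j, w j * x j = 0) → W = ⊥) ∧
    (∀ W : Submodule ℂ (Fin n → ℂ),
        (∀ x ∈ W, X.mulVec x ∈ W) → (∀ x ∈ W, Y.mulVec x ∈ W) →
        v ∈ W → W = ⊤) := by
  have commutator := mulVec_mulVec_sub_of_mul_sub_mul_eq (X := X) (Y := Y) h
  refine ⟨fun W hX hY hw => ?_, fun W hX hY hv => ?_⟩
  · refine W.eq_bot_of_commutator_eq_id_on (f := X.mulVecLin) (g := Y.mulVecLin) hX hY
      fun x hx => ?_
    simp only [mulVecLin_apply, commutator, show w ⬝ᵥ x = 0 from hw x hx, zero_smul, add_zero]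
  · refine W.eq_top_of_commutator_sub_id_mem (f := X.mulVecLin) (g := Y.mulVecLin) hX hY
      fun x => ?_
    simpa only [mulVecLin_apply, commutator, add_sub_cancel_left] using W.smul_mem (w ⬝ᵥ x) hv

/-- If `Y*X - X*Y = 1 + v·w` (a rank-one perturbation of the identity),
then: (a) the only subspace `W ⊆ ℂⁿ` stable under `X` and `Y` and contained in `ker w`
is `0`; (b) the only subspace stable under `X` and `Y` and containing `v` is `ℂⁿ`.
Hence the corresponding dimension-`(n,1)` representation of the deformed preprojective
algebra of the framed one-loop quiver is simple. -/
theorem stmt16 (n : ℕ) (hn : 1 ≤ n) (X Y : Matrix (Fin n) (Fin n) ℂ)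
    (v w : Fin n → ℂ)
    (h : Y * X - X * Y = 1 + Matrix.of (fun i j => v i * w j)) :
    (∀ W : Submodule ℂ (Fin n → ℂ),
        (∀ x ∈ W, X.mulVec x ∈ W) → (∀ x ∈ W, Y.mulVec x ∈ W) →
        (∀ x ∈ W, ∑ j, w j * x j = 0) → W = ⊥) ∧
    (∀ W : Submodule ℂ (Fin n → ℂ),
        (∀ x ∈ W, X.mulVec x ∈ W) → (∀ x ∈ W, Y.mulVec x ∈ W) →
        v ∈ W → W = ⊤) :=
  stmt16_general n X Y v w h
end

section
/- Let F(x, y) = Σ_{(r,s)} a_{rs} x^r y^s be a complex polynomial in two variables (finite sum), and let (x₁, y₁), …, (xₙ, yₙ) ∈ ℂ² be points with F(xᵢ, yᵢ) = 0 for all i, such that x₁, …, xₙ are pairwise distinct and y₁, …, yₙ are pairwise distinct. Define n×n complex matrices X = diag(x₁, …, xₙ), Y = diag(y₁, …, yₙ), the column vector v = (1, …, 1)ᵗ, the row vector w = −(1, …, 1), D = Idₙ + v·w, and let Z be any matrix with arbitrary diagonal entries Z_{ii} = αᵢ and off-diagonal entries Z_{ij} = F(x_j, y_i)/((x_i − x_j)(y_i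 − y_j)) for i ≠ j. Then the following matrix identities hold: (i) ZX − XZ = Σ_{(r,s)} a_{rs} Σ_{k=0}^{s−1} Y^{s−k−1} D Y^k X^r; and (ii) ZY − YZ = −Σ_{(r,s)} a_{rs} Σ_{l=0}^{r−1} Y^s X^{r−l−1} D X^l. -/
/-!
Both sides are compared entrywise. Commuting with a diagonal matrix multiplies `Z i j` by
`d j - d i`, so the diagonal vanishes, as it does on the right since `D = 1 - J` has zero
diagonal. For `i ≠ j`, `D i j = -1` and the factorisation of `t^s - t'^s` turns entry `(i, j)`
of the right-hand side of (i) into `(F(x_j, y_j) - F(x_j, y_i)) / (y_i - y_j)`; since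
`(x_j, y_j)` lies on the curve, this is `Z i j (x j - x i)`. Identity (ii) is the same
computation in the first variable, using `F(x_i, y_i) = 0`.
-/

open Finset Matrix

section Bivariate

variable {R : Type*} [CommRing R]

lemma pow_sub_pow_eq_sub_mul_sum (t t' : R) (s : ℕ) :
    t ^ s - t' ^ s = (t - t') * ∑ k ∈ range s, t ^ (s - k - 1) * t' ^ k := by
  rw [← geom_sum₂_mul, geom_sum₂_comm, mul_comm]
  congr 1
  refine sum_congr rfl fun k _ => ?_
  rw [mul_comm, Nat.sub_right_comm]

def evalBivariate (S : Finset (ℕ × ℕ)) (a : ℕ × ℕ → R) (u t : R) : R :=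
  ∑ p ∈ S, a p * u ^ p.1 * t ^ p.2

variable (S : Finset (ℕ × ℕ)) (a : ℕ × ℕ → R)

lemma evalBivariate_sub_evalBivariate_right (u t t' : R) :
    evalBivariate S a u t - evalBivariate S a u t' =
      (t - t') * ∑ p ∈ S, a p * u ^ p.1 * ∑ k ∈ range p.2, t ^ (p.2 - k - 1) * t' ^ k := by
  rw [evalBivariate, evalBivariate, ← sum_sub_distrib, mul_sum]
  refine sum_congr rfl fun p _ => ?_
  linear_combination a p * u ^ p.1 * pow_sub_pow_eq_sub_mul_sum t t' p.2

lemma evalBivariate_sub_evalBivariate_left (u u' t : R) :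
    evalBivariate S a u t - evalBivariate S a u' t =
      (u - u') * ∑ p ∈ S, a p * t ^ p.2 * ∑ l ∈ range p.1, u ^ (p.1 - l - 1) * u' ^ l := by
  rw [evalBivariate, evalBivariate, ← sum_sub_distrib, mul_sum]
  refine sum_congr rfl fun p _ => ?_
  linear_combination a p * t ^ p.2 * pow_sub_pow_eq_sub_mul_sum u u' p.1

end Bivariate

section DiagonalCommutators

variable {ι R : Type*} [DecidableEq ι] [CommRing R]

lemma one_sub_of_one_apply (i j : ι) :
    (1 - of fun _ _ => 1 : Matrix ι ι R) i j = if i = j then 0 else -1 := by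
  by_cases h : i = j <;> simp [one_apply, h]

variable [Fintype ι]

lemma commutator_diagonal_apply (Z : Matrix ι ι R) (d : ι → R) (i j : ι) :
    (Z * diagonal d - diagonal d * Z) i j = Z i j * (d j - d i) := by
  simp only [Matrix.sub_apply, mul_diagonal, diagonal_mul]
  ring

variable (S : Finset (ℕ × ℕ)) (a : ℕ × ℕ → R) (x y : ι → R) (D : Matrix ι ι R)

lemma sum_smul_sum_diagonal_pow_mul_apply (i j : ι) :
    (∑ p ∈ S, a p • ∑ k ∈ range p.2,
        diagonal y ^ (p.2 - k - 1) * D * diagonal y ^ k * diagonal x ^ p.1) i j =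
      D i j * ∑ p ∈ S, a p * x j ^ p.1 * ∑ k ∈ range p.2, y i ^ (p.2 - k - 1) * y j ^ k := by
  simp only [Matrix.sum_apply, Matrix.smul_apply, diagonal_pow, mul_diagonal, diagonal_mul,
    smul_eq_mul, Pi.pow_apply, mul_sum]
  refine sum_congr rfl fun p _ => sum_congr rfl fun k _ => ?_
  ring

lemma sum_smul_sum_mul_diagonal_pow_apply (i j : ι) :
    (∑ p ∈ S, a p • ∑ l ∈ range p.1,
        diagonal y ^ p.2 * diagonal x ^ (p.1 - l - 1) * D * diagonal x ^ l) i j =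
      D i j * ∑ p ∈ S, a p * y i ^ p.2 * ∑ l ∈ range p.1, x i ^ (p.1 - l - 1) * x j ^ l := by
  simp only [Matrix.sum_apply, Matrix.smul_apply, diagonal_pow, mul_diagonal,
    diagonal_mul_diagonal, diagonal_mul, smul_eq_mul, Pi.pow_apply, mul_sum]
  refine sum_congr rfl fun p _ => sum_congr rfl fun l _ => ?_
  ring

end DiagonalCommutators

section MoserMatrix

variable {ι K : Type*} [Field K]

def IsMoserMatrix (S : Finset (ℕ × ℕ)) (a : ℕ × ℕ → K) (x y : ι → K) (Z : Matrix ι ι K) :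
    Prop :=
  ∀ i j, i ≠ j → Z i j = evalBivariate S a (x j) (y i) / ((x i - x j) * (y i - y j))

variable [Fintype ι] [DecidableEq ι] {S : Finset (ℕ × ℕ)} {a : ℕ × ℕ → K} {x y : ι → K}
  {Z : Matrix ι ι K}

theorem IsMoserMatrix.commutator_diagonal_x (hx : Function.Injective x)
    (hy : Function.Injective y) (hcurve : ∀ i, evalBivariate S a (x i) (y i) = 0)
    (hZ : IsMoserMatrix S a x y Z) :
    Z * diagonal x - diagonal x * Z = ∑ p ∈ S, a p • ∑ k ∈ range p.2,
      diagonal y ^ (p.2 - k - 1) * (1 - of fun _ _ => 1) * diagonal y ^ k * diagonal x ^ p.1 := by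
  ext i j
  rw [commutator_diagonal_apply, sum_smul_sum_diagonal_pow_mul_apply, one_sub_of_one_apply]
  rcases eq_or_ne i j with rfl | hij
  · simp
  have hxij : x i - x j ≠ 0 := sub_ne_zero.2 (hx.ne hij)
  have hyij : y i - y j ≠ 0 := sub_ne_zero.2 (hy.ne hij)
  have hF := evalBivariate_sub_evalBivariate_right S a (x j) (y i) (y j)
  rw [hcurve j, sub_zero] at hF
  rw [hZ i j hij, hF, if_neg hij]
  field_simp
  ring

theorem IsMoserMatrix.commutator_diagonal_y (hx : Function.Injective x)
    (hy : Function.Injective y) (hcurve : ∀ i, evalBivariate S a (x i) (y i) = 0)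
    (hZ : IsMoserMatrix S a x y Z) :
    Z * diagonal y - diagonal y * Z = -∑ p ∈ S, a p • ∑ l ∈ range p.1,
      diagonal y ^ p.2 * diagonal x ^ (p.1 - l - 1) * (1 - of fun _ _ => 1) * diagonal x ^ l := by
  ext i j
  rw [Matrix.neg_apply, commutator_diagonal_apply, sum_smul_sum_mul_diagonal_pow_apply,
    one_sub_of_one_apply]
  rcases eq_or_ne i j with rfl | hij
  · simp
  have hxij : x i - x j ≠ 0 := sub_ne_zero.2 (hx.ne hij)
  have hyij : y i - y j ≠ 0 := sub_ne_zero.2 (hy.ne hij)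
  have hF := evalBivariate_sub_evalBivariate_left S a (x i) (x j) (y i)
  rw [hcurve i, zero_sub, neg_eq_iff_eq_neg] at hF
  rw [hZ i j hij, hF, if_neg hij]
  field_simp
  ring

end MoserMatrix

theorem stmt17_general (n : ℕ) (S : Finset (ℕ × ℕ)) (a : ℕ × ℕ → ℂ)
    (x y : Fin n → ℂ)
    (hx : Function.Injective x) (hy : Function.Injective y)
    (hcurve : ∀ i : Fin n, ∑ p ∈ S, a p * x i ^ p.1 * y i ^ p.2 = 0)
    (X Y D Z : Matrix (Fin n) (Fin n) ℂ)
    (hX : X = Matrix.diagonal x) (hY : Y = Matrix.diagonal y)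
    (v w : Fin n → ℂ) (hv : v = fun _ => 1) (hw : w = fun _ => -1)
    (hD : D = 1 + Matrix.of (fun i j => v i * w j))
    (hZoff : ∀ i j, i ≠ j →
      Z i j = (∑ p ∈ S, a p * x j ^ p.1 * y i ^ p.2) / ((x i - x j) * (y i - y j))) :
    Z * X - X * Z =
      ∑ p ∈ S, a p • ∑ k ∈ Finset.range p.2, Y ^ (p.2 - k - 1) * D * Y ^ k * X ^ p.1 ∧
    Z * Y - Y * Z =
      -∑ p ∈ S, a p • ∑ l ∈ Finset.range p.1, Y ^ p.2 * X ^ (p.1 - l - 1) * D * X ^ l := by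
  have hD' : D = 1 - of fun _ _ => 1 := by
    ext i j
    simp [hD, hv, hw, sub_eq_add_neg]
  subst hX hY hD'
  exact ⟨IsMoserMatrix.commutator_diagonal_x hx hy hcurve hZoff,
    IsMoserMatrix.commutator_diagonal_y hx hy hcurve hZoff⟩

/-- Calogero–Moser matrices attached to a plane curve
`F(x,y) = ∑_{(r,s)} a_{rs} x^r y^s = 0`: with `X`, `Y` diagonal matrices built from `n`
points of the curve with pairwise distinct coordinates, `v = (1,…,1)ᵗ`, `w = −(1,…,1)`,
`D = Idₙ + v·w` and `Z` the generalized Moser matrix, the commutators `[Z,X]` and `[Z,Y]`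
are given by the stated sums (the defining relations of `Π^λ(B)` in this representation). -/
theorem stmt17 (n : ℕ) (S : Finset (ℕ × ℕ)) (a : ℕ × ℕ → ℂ)
    (x y : Fin n → ℂ)
    (hx : Function.Injective x) (hy : Function.Injective y)
    (hcurve : ∀ i : Fin n, ∑ p ∈ S, a p * x i ^ p.1 * y i ^ p.2 = 0)
    (α : Fin n → ℂ)
    (X Y D Z : Matrix (Fin n) (Fin n) ℂ)
    (hX : X = Matrix.diagonal x) (hY : Y = Matrix.diagonal y)
    (v w : Fin n → ℂ) (hv : v = fun _ => 1) (hw : w = fun _ => -1)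
    (hD : D = 1 + Matrix.of (fun i j => v i * w j))
    (hZdiag : ∀ i, Z i i = α i)
    (hZoff : ∀ i j, i ≠ j →
      Z i j = (∑ p ∈ S, a p * x j ^ p.1 * y i ^ p.2) / ((x i - x j) * (y i - y j))) :
    Z * X - X * Z =
      ∑ p ∈ S, a p • ∑ k ∈ Finset.range p.2, Y ^ (p.2 - k - 1) * D * Y ^ k * X ^ p.1 ∧
    Z * Y - Y * Z =
      -∑ p ∈ S, a p • ∑ l ∈ Finset.range p.1, Y ^ p.2 * X ^ (p.1 - l - 1) * D * X ^ l :=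
  stmt17_general n S a x y hx hy hcurve X Y D Z hX hY v w hv hw hD hZoff
end
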